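/- arXiv:1804.10370 — 6 statements merged into one kernel-verified Lean document; each statement's English description precedes it below -/
import Mathlib

section
/- For every positive integer n, the number of centred Catalan sets of size n equals the n-th Catalan number C(n) = binomial(2n, n)/(n+1). -/
open Finset

/-- `S` is a centred Catalan set of size `n`: an `n`-subset of `{-n+1,…,n-1}` with
`|S ∩ {-i,…,i}| ≥ i+1` for all `0 ≤ i ≤ n-1`. -/
def IsCCS (n : ℕ) (S : Finset ℤ) : Prop :=
  S.card = n ∧ (∀ x ∈ S, -(n : ℤ) + 1 ≤ x ∧ x ≤ (n : ℤ) - 1) ∧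
  ∀ i : ℕ, i ≤ n - 1 → (i : ℤ) + 1 ≤ ((S ∩ Finset.Icc (-(i : ℤ)) (i : ℤ)).card : ℤ)

/-- The dilation operator `s_l`. -/
def dil (l : ℤ) (x : ℤ) : ℤ := if 0 < x then x + l else if x = 0 then 0 else x - l

/-- Concatenation `S1 ∘ S2 = S1 ∪ s_{|S1|-1}(S2)` of centred Catalan sets. -/
def ccsConcat (S1 S2 : Finset ℤ) : Finset ℤ := S1 ∪ S2.image (dil ((S1.card : ℤ) - 1))

/-- A Dyck path: steps `±1`, nonnegative partial sums, total sum `0`. -/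
def IsDyck (L : List ℤ) : Prop :=
  (∀ x ∈ L, x = 1 ∨ x = -1) ∧ (∀ k, 0 ≤ (L.take k).sum) ∧ L.sum = 0

/-- The `p`-th integer in the reading order `0, -1, 1, -2, 2, …, -n+1, n-1, n`. -/
def readOrder (n : ℕ) (p : ℕ) : ℤ :=
  if p = 2 * n - 1 then (n : ℤ)
  else if p % 2 = 1 then -(((p + 1) / 2 : ℕ) : ℤ) else ((p / 2 : ℕ) : ℤ)

/-- The Dyck path `D(S)` associated with a centred Catalan set `S` of size `n`. -/
def toDyck (n : ℕ) (S : Finset ℤ) : List ℤ :=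
  (List.range (2 * n)).map fun p => if readOrder n p ∈ S then (1 : ℤ) else -1

/-- A Motzkin path: steps in `{-1,0,1}`, nonnegative partial sums, total sum `0`. -/
def IsMotzkin (L : List ℤ) : Prop :=
  (∀ x ∈ L, x = -1 ∨ x = 0 ∨ x = 1) ∧ (∀ k, 0 ≤ (L.take k).sum) ∧ L.sum = 0

/-- The Motzkin path `M(S)` of a centred Catalan set `S` of size `n`:
its `i`-th step is `|{-i,i} ∩ S| - 1`. -/
def motz (n : ℕ) (S : Finset ℤ) : List ℤ :=
  (List.range (n - 1)).map fun k =>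
    ((S ∩ ({-((k : ℤ) + 1), (k : ℤ) + 1} : Finset ℤ)).card : ℤ) - 1

/-- The area enclosed between a Motzkin path and the x-axis
(sum of the trapezoid areas `(h_{j-1}+h_j)/2`, which for a path returning to the
x-axis equals the sum of the heights `h_0, …, h_{len-1}`). -/
def marea (L : List ℤ) : ℤ := ∑ j ∈ Finset.range L.length, (L.take j).sum

/-- In every row, consecutive nonzero entries alternate in sign. -/
def RowAlt (A : ℤ → ℤ → ℤ) : Prop :=
  ∀ i j1 j2, j1 < j2 → A i j1 ≠ 0 → A i j2 ≠ 0 →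
    (∀ j, j1 < j → j < j2 → A i j = 0) → A i j1 = -A i j2

/-- In every column, consecutive nonzero entries alternate in sign. -/
def ColAlt (A : ℤ → ℤ → ℤ) : Prop :=
  ∀ j i1 i2, i1 < i2 → A i1 j ≠ 0 → A i2 j ≠ 0 →
    (∀ i, i1 < i → i < i2 → A i j = 0) → A i1 j = -A i2 j

/-- In every column, the first nonzero entry from the top (rows are numbered from
the bottom, so the entry with the largest row index) is `1`. -/
def ColTopPos (A : ℤ → ℤ → ℤ) : Prop :=
  ∀ i j, A i j ≠ 0 → (∀ i', i < i' → A i' j = 0) → A i j = 1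

/-- An alternating sign triangle of order `n`, encoded as `A : ℤ → ℤ → ℤ` where
`A i j` is the entry in row `i` (from the bottom, `1 ≤ i ≤ n`) and column `j`
(`-i+1 ≤ j ≤ i-1`), with value `0` outside this range. -/
def IsAST (n : ℕ) (A : ℤ → ℤ → ℤ) : Prop :=
  (∀ i j, A i j ≠ 0 → 1 ≤ i ∧ i ≤ (n : ℤ) ∧ -i + 1 ≤ j ∧ j ≤ i - 1) ∧
  (∀ i j, A i j = -1 ∨ A i j = 0 ∨ A i j = 1) ∧
  (∀ i : ℤ, 1 ≤ i → i ≤ (n : ℤ) → ∑ j ∈ Finset.Icc (-i + 1) (i - 1), A i j = 1) ∧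
  RowAlt A ∧ ColAlt A ∧ ColTopPos A

/-- The set of column labels of an AST of order `n` with positive column-sum. -/
noncomputable def astCols (n : ℕ) (A : ℤ → ℤ → ℤ) : Finset ℤ :=
  (Finset.Icc (-(n : ℤ) + 1) ((n : ℤ) - 1)).filter fun j =>
    0 < ∑ i ∈ Finset.Icc (1 : ℤ) (n : ℤ), A i j

/-- An `(n,l)`-alternating sign trapezoid, encoded as `A : ℤ → ℤ → ℤ` where
`A i j` is the entry in row `i` (from the bottom, `1 ≤ i ≤ n`) and column `j`
(`-i+1 ≤ j ≤ l+i-1`), with value `0` outside this range. -/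
def IsASTrap (n l : ℕ) (A : ℤ → ℤ → ℤ) : Prop :=
  (∀ i j, A i j ≠ 0 → 1 ≤ i ∧ i ≤ (n : ℤ) ∧ -i + 1 ≤ j ∧ j ≤ (l : ℤ) + i - 1) ∧
  (∀ i j, A i j = -1 ∨ A i j = 0 ∨ A i j = 1) ∧
  (∀ i : ℤ, 1 ≤ i → i ≤ (n : ℤ) →
    ∑ j ∈ Finset.Icc (-i + 1) ((l : ℤ) + i - 1), A i j = 1) ∧
  (∀ j : ℤ, 1 ≤ j → j ≤ (l : ℤ) - 1 → ∑ i ∈ Finset.Icc (1 : ℤ) (n : ℤ), A i j = 0) ∧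
  RowAlt A ∧ ColAlt A ∧ ColTopPos A

/-- The centred Catalan set `S(A)` associated with an `(n,l)`-AS-trapezoid `A`:
take the columns with positive column-sum, subtract `1` from nonpositive labels,
subtract `l-1` from positive labels, and adjoin `0`. -/
noncomputable def trapCat (n l : ℕ) (A : ℤ → ℤ → ℤ) : Finset ℤ :=
  insert 0
    (((Finset.Icc (-(n : ℤ) + 1) ((l : ℤ) + n - 1)).filter
        (fun j => 0 < ∑ i ∈ Finset.Icc (1 : ℤ) (n : ℤ), A i j)).image
      fun j => if j ≤ 0 then j - 1 else j - ((l : ℤ) - 1))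

/-- `wS n l S`: the number of `(n,l)`-AS-trapezoids with associated centred
Catalan set `S`. -/
noncomputable def wS (n l : ℕ) (S : Finset ℤ) : ℕ :=
  Nat.card {A : ℤ → ℤ → ℤ // IsASTrap n l A ∧ trapCat n l A = S}

/-- `wM n l M`: the number of `(n,l)`-AS-trapezoids whose associated Motzkin path
is `M`. -/
noncomputable def wM (n l : ℕ) (M : List ℤ) : ℕ :=
  Nat.card {A : ℤ → ℤ → ℤ // IsASTrap n l A ∧ motz (n + 1) (trapCat n l A) = M}

/-- Placing the trapezoid `A2` centred above the `n1`-row trapezoid `A1`. -/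
def stack (n1 : ℕ) (A1 A2 : ℤ → ℤ → ℤ) : ℤ → ℤ → ℤ :=
  fun i j => if i ≤ (n1 : ℤ) then A1 i j else A2 (i - n1) (j + n1)

section CCSAux

open DyckStep

private lemma ro_inj' {n : ℕ} (hn : 0 < n) {p q : ℕ} (hp : p < 2*n) (hq : q < 2*n)
    (h : readOrder n p = readOrder n q) : p = q := by
  unfold readOrder at h
  split_ifs at h <;> omega

private lemma ro_mem' {n i p : ℕ} (hi : i + 1 ≤ n) (hp : p < 2*i+1) :
    -(i:ℤ) ≤ readOrder n p ∧ readOrder n p ≤ i := by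
  unfold readOrder
  split_ifs <;> constructor <;> omega

private lemma ro_out' {n i p : ℕ} (hi : i + 1 ≤ n) (hp1 : 2*i+1 ≤ p) (hp2 : p < 2*n) :
    readOrder n p < -(i:ℤ) ∨ (i:ℤ) < readOrder n p := by
  unfold readOrder
  split_ifs <;> omega

private lemma ro_surj' {n i : ℕ} (hi : i + 1 ≤ n) {x : ℤ} (h1 : -(i:ℤ) ≤ x) (h2 : x ≤ i) :
    ∃ p, p < 2*i+1 ∧ readOrder n p = x := by
  rcases le_or_gt 0 x with hx | hx
  · exact ⟨2*x.toNat, by omega, by unfold readOrder; split_ifs <;> omega⟩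
  · exact ⟨2*(-x).toNat - 1, by omega, by unfold readOrder; split_ifs <;> omega⟩

private lemma count_UD' (l : List DyckStep) : l.count U + l.count D = l.length := by
  induction l with
  | nil => simp
  | cons a t ih => cases a <;> simp [List.count_cons] <;> omega

private lemma countU_map' (m : ℕ) (P : ℕ → Prop) [DecidablePred P] :
    (((List.range m).map fun p => if P p then U else D).count U)
      = ((Finset.range m).filter P).card := by
  induction m with
  | zero => simp
  | succ m ih =>
    rw [List.range_succ, List.map_append, List.count_append, Finset.range_add_one,
      Finset.filter_insert]
    by_cases h : P m
    · rw [if_pos h, Finset.card_insert_of_notMem (by simp)]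
      simp [h, ih]
    · rw [if_neg h]
      simp [h, ih]

private lemma count_take_eq' (l : List DyckStep) (k : ℕ) (hk : k ≤ l.length) :
    ((l.take k).count U) = ((Finset.range k).filter (fun q => l.getD q D = U)).card := by
  induction k with
  | zero => simp
  | succ k ih =>
    have hk' : k < l.length := hk
    rw [List.take_succ, List.count_append, Finset.range_add_one, Finset.filter_insert,
      ih (le_of_lt hk')]
    rw [List.getElem?_eq_getElem hk', List.getD_eq_getElem l D hk']
    rcases (l[k]).dichotomy with h | h
    · rw [if_pos h, Finset.card_insert_of_notMem (by simp)]
      simp [h]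
    · rw [if_neg (by simp [h])]
      simp [h]

private lemma prefixCard' {n i : ℕ} (hi : i + 1 ≤ n) (S : Finset ℤ) :
    ((Finset.range (2*i+1)).filter (fun p => readOrder n p ∈ S)).card
      = (S ∩ Finset.Icc (-(i:ℤ)) i).card := by
  apply Finset.card_bij (fun p _ => readOrder n p)
  · intro p hp
    simp only [Finset.mem_filter, Finset.mem_range] at hp
    simp only [Finset.mem_inter, Finset.mem_Icc]
    exact ⟨hp.2, ro_mem' hi hp.1⟩
  · intro p hp q hq h
    simp only [Finset.mem_filter, Finset.mem_range] at hp hq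
    exact ro_inj' (by omega) (by omega) (by omega) h
  · intro x hx
    simp only [Finset.mem_inter, Finset.mem_Icc] at hx
    obtain ⟨p, hp, hfp⟩ := ro_surj' hi hx.2.1 hx.2.2
    exact ⟨p, by simp only [Finset.mem_filter, Finset.mem_range]; exact ⟨hp, hfp ▸ hx.1⟩, hfp⟩

private lemma totalCard' {n : ℕ} (hn : 0 < n) (S : Finset ℤ)
    (hS : ∀ x ∈ S, -(n:ℤ)+1 ≤ x ∧ x ≤ (n:ℤ)-1) :
    ((Finset.range (2*n)).filter (fun p => readOrder n p ∈ S)).card = S.card := by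
  apply Finset.card_bij (fun p _ => readOrder n p)
  · intro p hp
    exact (Finset.mem_filter.mp hp).2
  · intro p hp q hq h
    simp only [Finset.mem_filter, Finset.mem_range] at hp hq
    exact ro_inj' hn hp.1 hq.1 h
  · intro x hx
    obtain ⟨h1, h2⟩ := hS x hx
    have hc : ((n-1 : ℕ) : ℤ) = (n:ℤ) - 1 := by
      rw [Nat.cast_sub (by omega : 1 ≤ n), Nat.cast_one]
    have hi : (n-1) + 1 ≤ n := by omega
    obtain ⟨p, hp, hfp⟩ := ro_surj' (i := n-1) (x := x) hi (by rw [hc]; omega)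
      (by rw [hc]; omega)
    exact ⟨p, by simp only [Finset.mem_filter, Finset.mem_range]; exact ⟨by omega, hfp ▸ hx⟩, hfp⟩

/-- The Dyck step word of a CCS. -/
private def ccsWord (n : ℕ) (S : Finset ℤ) : List DyckStep :=
  (List.range (2*n)).map fun p => if readOrder n p ∈ S then U else D

private lemma ccsWord_length (n : ℕ) (S : Finset ℤ) : (ccsWord n S).length = 2*n := by
  simp [ccsWord]

private lemma ccsWord_take_countU (n : ℕ) (S : Finset ℤ) {k : ℕ} (hk : k ≤ 2*n) :
    ((ccsWord n S).take k).count U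
      = ((Finset.range k).filter (fun p => readOrder n p ∈ S)).card := by
  rw [ccsWord, ← List.map_take, List.take_range, min_eq_left hk, countU_map']

private lemma ccsWord_getElem (n : ℕ) (S : Finset ℤ) {q : ℕ} (hq : q < (ccsWord n S).length) :
    (ccsWord n S)[q] = if readOrder n q ∈ S then U else D := by
  simp [ccsWord]

private lemma ccsWord_getElem? (n : ℕ) (S : Finset ℤ) {q : ℕ} (hq : q < 2*n) :
    (ccsWord n S)[q]? = some (if readOrder n q ∈ S then U else D) := by
  rw [List.getElem?_eq_getElem (by rw [ccsWord_length]; omega)]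
  rw [ccsWord_getElem]

private lemma ccs_dyck1 {n : ℕ} (hn : 0 < n) {S : Finset ℤ} (h : IsCCS n S) :
    (ccsWord n S).count U = (ccsWord n S).count D := by
  have hfull : (ccsWord n S).count U = n := by
    have := ccsWord_take_countU n S (le_refl (2*n))
    rw [List.take_of_length_le (by rw [ccsWord_length])] at this
    rw [this, totalCard' hn S h.2.1, h.1]
  have := count_UD' (ccsWord n S)
  rw [ccsWord_length] at this
  omega

private lemma ccs_dyck2 {n : ℕ} (hn : 0 < n) {S : Finset ℤ} (h : IsCCS n S) (k : ℕ) :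
    ((ccsWord n S).take k).count D ≤ ((ccsWord n S).take k).count U := by
  obtain ⟨hcard, hbd, hcnt⟩ := h
  -- key: doubled count of U in any prefix of length ≤ 2n is at least the length
  have key : ∀ m, m ≤ 2*n → m ≤ 2 * ((Finset.range m).filter (fun p => readOrder n p ∈ S)).card := by
    intro m hm
    rcases Nat.eq_zero_or_pos m with rfl | hm0
    · simp
    obtain ⟨i, rfl | rfl⟩ := Nat.even_or_odd' m
    · -- m = 2*i with i ≥ 1
      obtain ⟨j, rfl⟩ : ∃ j, i = j + 1 := ⟨i - 1, by omega⟩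
      have hmono : ((Finset.range (2*j+1)).filter (fun p => readOrder n p ∈ S)).card ≤
          ((Finset.range (2*(j+1))).filter (fun p => readOrder n p ∈ S)).card :=
        Finset.card_le_card (Finset.filter_subset_filter _ (Finset.range_subset_range.2 (by omega)))
      have hpc := prefixCard' (n := n) (i := j) (by omega) S
      have hc := hcnt j (by omega)
      rw [← hpc] at hc
      omega
    · -- m = 2*i+1
      have hpc := prefixCard' (n := n) (i := i) (by omega) S
      have hc := hcnt i (by omega)
      rw [← hpc] at hc
      omega
  rcases le_or_gt k (2*n) with hk | hk
  · have hU := ccsWord_take_countU n S hk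
    have hlen : ((ccsWord n S).take k).length = k := by
      rw [List.length_take, ccsWord_length]; omega
    have hUD := count_UD' ((ccsWord n S).take k)
    rw [hlen] at hUD
    have := key k hk
    omega
  · rw [List.take_of_length_le (by rw [ccsWord_length]; omega)]
    exact le_of_eq (ccs_dyck1 hn ⟨hcard, hbd, hcnt⟩).symm

/-- The Dyck word of a CCS. -/
private def ccsDW {n : ℕ} (hn : 0 < n) {S : Finset ℤ} (h : IsCCS n S) : DyckWord :=
  ⟨ccsWord n S, ccs_dyck1 hn h, ccs_dyck2 hn h⟩

private lemma ccsDW_semilength {n : ℕ} (hn : 0 < n) {S : Finset ℤ} (h : IsCCS n S) :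
    (ccsDW hn h).semilength = n := by
  have hfull : (ccsWord n S).count U = n := by
    have := ccsWord_take_countU n S (le_refl (2*n))
    rw [List.take_of_length_le (by rw [ccsWord_length])] at this
    rw [this, totalCard' hn S h.2.1, h.1]
  simpa [ccsDW, DyckWord.semilength] using hfull

/-- The CCS associated to a Dyck word. -/
private def dwCCS (n : ℕ) (p : DyckWord) : Finset ℤ :=
  ((Finset.range (2*n)).filter (fun q => p.toList.getD q D = U)).image (readOrder n)

private lemma dw_length {n : ℕ} {p : DyckWord} (hs : p.semilength = n) :
    p.toList.length = 2*n := by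
  rw [← DyckWord.two_mul_semilength_eq_length, hs]

private lemma dw_last {n : ℕ} (hn : 0 < n) {p : DyckWord} (hs : p.semilength = n) :
    p.toList.getD (2*n-1) D = D := by
  have hlen := dw_length hs
  have hne : p.toList ≠ [] := by
    intro hnil; rw [hnil] at hlen; simp at hlen; omega
  have h2 := p.getLast_eq_D hne
  rw [List.getLast_eq_getElem hne] at h2
  have e : p.toList[2*n-1]? = some D := by
    rw [show 2*n-1 = p.toList.length - 1 by omega, List.getElem?_eq_getElem (by omega), h2]
  rw [List.getD_eq_getElem _ _ (by omega)]
  rw [List.getElem?_eq_getElem (by omega : 2*n-1 < p.toList.length)] at e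
  exact Option.some.inj e

private lemma mem_dwCCS {n : ℕ} {p : DyckWord} {x : ℤ} :
    x ∈ dwCCS n p ↔ ∃ q, q < 2*n ∧ p.toList.getD q D = U ∧ readOrder n q = x := by
  simp only [dwCCS, Finset.mem_image, Finset.mem_filter, Finset.mem_range]
  constructor
  · rintro ⟨q, ⟨h1, h2⟩, h3⟩; exact ⟨q, h1, h2, h3⟩
  · rintro ⟨q, h1, h2, h3⟩; exact ⟨q, ⟨h1, h2⟩, h3⟩

private lemma dwCCS_isCCS {n : ℕ} (hn : 0 < n) {p : DyckWord} (hs : p.semilength = n) :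
    IsCCS n (dwCCS n p) := by
  have hlen := dw_length hs
  have hinj : ∀ a ∈ (Finset.range (2*n)).filter (fun q => p.toList.getD q D = U),
      ∀ b ∈ (Finset.range (2*n)).filter (fun q => p.toList.getD q D = U),
      readOrder n a = readOrder n b → a = b := by
    intro a ha b hb hab
    simp only [Finset.mem_filter, Finset.mem_range] at ha hb
    exact ro_inj' hn ha.1 hb.1 hab
  refine ⟨?_, ?_, ?_⟩
  · rw [dwCCS, Finset.card_image_of_injOn hinj]
    have := count_take_eq' p.toList (2*n) (by omega)
    rw [List.take_of_length_le (by omega)] at this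
    rw [← this]
    exact hs ▸ rfl
  · intro x hx
    obtain ⟨q, hq, hU, hfq⟩ := mem_dwCCS.mp hx
    have hqne : q ≠ 2*n-1 := by
      intro rfl'
      rw [rfl'] at hU
      rw [dw_last hn hs] at hU
      exact absurd hU (by simp)
    have := ro_mem' (n := n) (i := n-1) (p := q) (by omega) (by omega)
    have hc : ((n-1 : ℕ) : ℤ) = (n:ℤ) - 1 := by
      rw [Nat.cast_sub (by omega : 1 ≤ n), Nat.cast_one]
    rw [hc, hfq] at this
    constructor <;> omega
  · intro i hi
    have hi' : i + 1 ≤ n := by omega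
    have hset : dwCCS n p ∩ Finset.Icc (-(i:ℤ)) i
        = ((Finset.range (2*i+1)).filter (fun q => p.toList.getD q D = U)).image (readOrder n) := by
      ext x
      simp only [Finset.mem_inter, Finset.mem_Icc, Finset.mem_image, Finset.mem_filter,
        Finset.mem_range, mem_dwCCS]
      constructor
      · rintro ⟨⟨q, hq, hU, rfl⟩, hx1, hx2⟩
        refine ⟨q, ⟨?_, hU⟩, rfl⟩
        by_contra hcon
        rcases ro_out' (n := n) (i := i) (p := q) hi' (by omega) hq with h | h <;> omega
      · rintro ⟨q, ⟨hq, hU⟩, rfl⟩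
        have := ro_mem' (n := n) hi' hq
        exact ⟨⟨q, by omega, hU, rfl⟩, this.1, this.2⟩
    rw [hset, Finset.card_image_of_injOn (fun a ha b hb hab => by
      simp only [Finset.mem_coe, Finset.mem_filter, Finset.mem_range] at ha hb
      exact ro_inj' hn (by omega) (by omega) hab)]
    have hcteq := count_take_eq' p.toList (2*i+1) (by omega)
    have hle := p.count_D_le_count_U (2*i+1)
    have hUD := count_UD' (p.toList.take (2*i+1))
    rw [List.length_take, hlen, min_eq_left (by omega)] at hUD
    rw [← hcteq]
    omega

private lemma dwCCS_word {n : ℕ} (hn : 0 < n) {p : DyckWord} (hs : p.semilength = n) :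
    ccsWord n (dwCCS n p) = p.toList := by
  have hlen := dw_length hs
  apply List.ext_getElem (by rw [ccsWord_length, hlen])
  intro q h1 h2
  rw [ccsWord_getElem n _ h1]
  rw [ccsWord_length] at h1
  have hmem : readOrder n q ∈ dwCCS n p ↔ p.toList[q] = U := by
    rw [mem_dwCCS]
    constructor
    · rintro ⟨q', hq', hU', heq⟩
      have hqq := ro_inj' hn hq' h1 heq
      subst hqq
      rwa [List.getD_eq_getElem _ _ (by omega)] at hU'
    · intro hU
      exact ⟨q, h1, by rwa [List.getD_eq_getElem _ _ (by omega)], rfl⟩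
  rcases (p.toList[q]).dichotomy with h | h
  · rw [h, if_pos (hmem.mpr h)]
  · have hnot : readOrder n q ∉ dwCCS n p := by
      intro hc
      have hUq := hmem.mp hc
      rw [h] at hUq
      exact DyckStep.noConfusion hUq
    rw [h, if_neg hnot]

end CCSAux

/-- The number of centred Catalan sets of size `n` is the `n`-th Catalan number
`C(n) = binomial(2n,n)/(n+1)`. -/
theorem stmt0 (n : ℕ) (hn : 0 < n) :
    Nat.card {S : Finset ℤ // IsCCS n S} = Nat.choose (2 * n) n / (n + 1) := by
  classical
  have hbij : Function.Bijective
      (fun S : {S : Finset ℤ // IsCCS n S} =>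
        (⟨ccsDW hn S.2, ccsDW_semilength hn S.2⟩ : {p : DyckWord // p.semilength = n})) := by
    constructor
    · rintro ⟨S1, h1⟩ ⟨S2, h2⟩ h
      have hw : ccsWord n S1 = ccsWord n S2 := congrArg (fun x => (x.1 : DyckWord).toList) h
      have key : ∀ (S1 S2 : Finset ℤ), IsCCS n S1 → IsCCS n S2 →
          ccsWord n S1 = ccsWord n S2 → ∀ x ∈ S1, x ∈ S2 := by
        intro T1 T2 hT1 hT2 hww x hx
        obtain ⟨hb1, hb2⟩ := hT1.2.1 x hx
        have hc : ((n-1 : ℕ) : ℤ) = (n:ℤ) - 1 := by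
          rw [Nat.cast_sub (by omega : 1 ≤ n), Nat.cast_one]
        obtain ⟨q, hq, hfq⟩ := ro_surj' (n := n) (i := n-1) (x := x) (by omega)
          (by rw [hc]; omega) (by rw [hc]; omega)
        have hq2 : q < 2*n := by omega
        have e := congrArg (fun l => l[q]?) hww
        simp only [ccsWord_getElem? n T1 hq2, ccsWord_getElem? n T2 hq2] at e
        rw [hfq] at e
        by_contra hcon
        rw [if_pos hx, if_neg hcon] at e
        exact DyckStep.noConfusion (Option.some.inj e)
      exact Subtype.ext (Finset.Subset.antisymm
        (fun x hx => key S1 S2 h1 h2 hw x hx)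
        (fun x hx => key S2 S1 h2 h1 hw.symm x hx))
    · rintro ⟨p, hp⟩
      refine ⟨⟨dwCCS n p, dwCCS_isCCS hn hp⟩, ?_⟩
      apply Subtype.ext
      apply DyckWord.ext
      exact dwCCS_word hn hp
  rw [Nat.card_congr (Equiv.ofBijective _ hbij), Nat.card_eq_fintype_card,
    DyckWord.card_dyckWord_semilength_eq_catalan, catalan_eq_centralBinom_div,
    Nat.centralBinom_eq_two_mul_choose]
end

section
/- The concatenation of two centred Catalan sets is a centred Catalan set: if S1 is a centred Catalan set of size m and S2 a centred Catalan set of size n, then S1 ∪ s_{m-1}(S2) is a centred Catalan set of size m+n-1, where s_l is the dilation operator sending x to x+l if x>0, to 0 if x=0, and to x-l if x<0. -/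
open Finset

lemma dil_inj (l : ℤ) (hl : 0 ≤ l) : Function.Injective (dil l) := by
  intro a b h
  simp only [dil] at h
  split_ifs at h <;> omega

lemma ccs_zero_mem {n : ℕ} {S : Finset ℤ} (h : IsCCS n S) : (0 : ℤ) ∈ S := by
  obtain ⟨_, _, hi⟩ := h
  have h0 := hi 0 (Nat.zero_le _)
  have : (S ∩ Finset.Icc (-((0:ℕ):ℤ)) ((0:ℕ):ℤ)).Nonempty := by
    rw [← Finset.card_pos]
    omega
  obtain ⟨x, hx⟩ := this
  simp only [Finset.mem_inter, Finset.mem_Icc] at hx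
  have hx0 : x = 0 := le_antisymm hx.2.2 hx.2.1
  rw [← hx0]
  exact hx.1

lemma ccs_one_le {n : ℕ} {S : Finset ℤ} (h : IsCCS n S) : 1 ≤ n := by
  have h0 := ccs_zero_mem h
  have hpos := Finset.card_pos.mpr ⟨(0:ℤ), h0⟩
  rw [h.1] at hpos
  exact hpos

/-- The concatenation of a centred Catalan set of size `m` with one of size `n`
is a centred Catalan set of size `m+n-1`. -/
theorem stmt3 (m n : ℕ) (S1 S2 : Finset ℤ) (h1 : IsCCS m S1) (h2 : IsCCS n S2) :
    IsCCS (m + n - 1) (ccsConcat S1 S2) := by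
  obtain ⟨hc1, hb1, hi1⟩ := id h1
  obtain ⟨hc2, hb2, hi2⟩ := id h2
  have h01 : (0:ℤ) ∈ S1 := ccs_zero_mem h1
  have h02 : (0:ℤ) ∈ S2 := ccs_zero_mem h2
  have hm1 : 1 ≤ m := ccs_one_le h1
  have hn1 : 1 ≤ n := ccs_one_le h2
  set l : ℤ := (S1.card : ℤ) - 1 with hl
  have hlm : l = (m : ℤ) - 1 := by rw [hl, hc1]
  have hl0 : 0 ≤ l := by rw [hlm]; omega
  have hinj := dil_inj l hl0
  -- the intersection of S1 with the dilated image is {0}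
  have hint : S1 ∩ S2.image (dil l) = {0} := by
    ext x
    simp only [Finset.mem_inter, Finset.mem_image, Finset.mem_singleton]
    constructor
    · rintro ⟨hxS1, y, hyS2, rfl⟩
      have hbx := hb1 (dil l y) hxS1
      simp only [dil] at hbx ⊢
      split_ifs at hbx ⊢ with hy1 hy2 <;> omega
    · rintro rfl
      exact ⟨h01, 0, h02, by simp [dil]⟩
  refine ⟨?_, ?_, ?_⟩
  · -- cardinality
    have hcu := Finset.card_union_add_card_inter S1 (S2.image (dil l))
    rw [hint, Finset.card_image_of_injective _ hinj, hc1, hc2,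
      Finset.card_singleton] at hcu
    have hgoal : ccsConcat S1 S2 = S1 ∪ S2.image (dil l) := rfl
    rw [hgoal]
    omega
  · -- bounds
    intro x hx
    simp only [ccsConcat, Finset.mem_union, Finset.mem_image] at hx
    push_cast [Nat.cast_sub (by omega : 1 ≤ m + n)]
    rcases hx with hx | ⟨y, hyS2, rfl⟩
    · have := hb1 x hx
      omega
    · have hby := hb2 y hyS2
      simp only [dil]
      split_ifs <;> omega
  · -- counting
    intro i hi
    have hi' : i ≤ m + n - 2 := by omega
    by_cases hcase : i + 1 ≤ m
    · have h1i := hi1 i (by omega)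
      have hsub : S1 ∩ Finset.Icc (-(i:ℤ)) (i:ℤ) ⊆
          ccsConcat S1 S2 ∩ Finset.Icc (-(i:ℤ)) (i:ℤ) :=
        Finset.inter_subset_inter (Finset.subset_union_left) (subset_refl _)
      have := Finset.card_le_card hsub
      omega
    · push_neg at hcase
      set k : ℕ := i + 1 - m with hk
      have hki : (k : ℤ) = (i : ℤ) + 1 - (m : ℤ) := by omega
      have hkn : k ≤ n - 1 := by omega
      have h2k := hi2 k hkn
      set B : Finset ℤ := (S2 ∩ Finset.Icc (-(k:ℤ)) (k:ℤ)).image (dil l) with hB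
      have hcardB : (B.card : ℤ) = ((S2 ∩ Finset.Icc (-(k:ℤ)) (k:ℤ)).card : ℤ) := by
        rw [hB, Finset.card_image_of_injective _ hinj]
      have hdisj : Disjoint (S1.erase 0) B := by
        rw [Finset.disjoint_left]
        intro x hxA hxB
        obtain ⟨hx0, hxS1⟩ := Finset.mem_erase.mp hxA
        obtain ⟨y, hy, rfl⟩ := Finset.mem_image.mp hxB
        have hbx := hb1 _ hxS1
        simp only [dil] at hbx hx0
        split_ifs at hbx hx0 <;> omega
      have hsub : (S1.erase 0) ∪ B ⊆
          ccsConcat S1 S2 ∩ Finset.Icc (-(i:ℤ)) (i:ℤ) := by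
        intro x hx
        rw [Finset.mem_inter, Finset.mem_Icc]
        rcases Finset.mem_union.mp hx with hx | hx
        · have hxS1 := Finset.mem_of_mem_erase hx
          have := hb1 x hxS1
          exact ⟨Finset.mem_union_left _ hxS1, by omega, by omega⟩
        · obtain ⟨y, hy, rfl⟩ := Finset.mem_image.mp hx
          obtain ⟨hyS2, hyI⟩ := Finset.mem_inter.mp hy
          rw [Finset.mem_Icc] at hyI
          refine ⟨Finset.mem_union_right _ (Finset.mem_image.mpr ⟨y, hyS2, rfl⟩), ?_, ?_⟩ <;>
            · simp only [dil]; split_ifs <;> omega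
      have hcardu := Finset.card_union_of_disjoint hdisj
      have hcardA : (S1.erase 0).card = m - 1 := by
        rw [Finset.card_erase_of_mem h01, hc1]
      have hle := Finset.card_le_card hsub
      rw [hcardu, hcardA] at hle
      have : ((S1.erase 0).card + B.card : ℤ) = ((m : ℤ) - 1) + B.card := by
        rw [hcardA]; push_cast [Nat.cast_sub hm1]; ring
      -- combine
      have hBk : (k : ℤ) + 1 ≤ (B.card : ℤ) := by rw [hcardB]; exact h2k
      have hcast : ((m - 1 + B.card : ℕ) : ℤ) = (m : ℤ) - 1 + (B.card : ℤ) := by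
        push_cast [Nat.cast_sub hm1]; ring
      omega
end

section
/- Every centred Catalan set of size at least 2 can be written uniquely as a concatenation of irreducible centred Catalan sets. -/
open Finset

/-- An irreducible centred Catalan set: one that is not a concatenation of two
centred Catalan sets each of size at least `2`. -/
def IsIrredCCS (S : Finset ℤ) : Prop :=
  IsCCS S.card S ∧
    ¬ ∃ S1 S2 : Finset ℤ, IsCCS S1.card S1 ∧ IsCCS S2.card S2 ∧
      2 ≤ S1.card ∧ 2 ≤ S2.card ∧ S = ccsConcat S1 S2

namespace CCS4

/-- count of S in symmetric interval -/
noncomputable def cnt (S : Finset ℤ) (k : ℕ) : ℕ := (S ∩ Finset.Icc (-(k:ℤ)) (k:ℤ)).card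

lemma dil_zero : dil 0 = id := by
  funext x; simp only [dil, id]; split_ifs <;> omega

lemma dil_cancel {l : ℤ} (hl : 0 ≤ l) (x : ℤ) : dil (-l) (dil l x) = x := by
  simp only [dil]; split_ifs <;> omega

lemma dil_cancel' {l : ℤ} (x : ℤ) (hx : l < x ∨ x < -l) :
    dil l (dil (-l) x) = x := by
  simp only [dil]; split_ifs <;> omega

lemma dil_inj {l : ℤ} (hl : 0 ≤ l) : Function.Injective (dil l) := by
  intro x y hxy; simp only [dil] at hxy; split_ifs at hxy <;> omega

lemma zero_mem_ccs {n : ℕ} {S : Finset ℤ} (h : IsCCS n S) (hn : 1 ≤ n) : 0 ∈ S := by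
  have h0 := h.2.2 0 (by omega)
  have : (0:ℤ) ∈ S ∩ Finset.Icc (-(0:ℕ):ℤ) ((0:ℕ):ℤ) := by
    have hne : (S ∩ Finset.Icc (-(0:ℕ):ℤ) ((0:ℕ):ℤ)).Nonempty := by
      rw [← Finset.card_pos]; omega
    obtain ⟨x, hx⟩ := hne
    have hx2 := Finset.mem_inter.1 hx
    have := Finset.mem_Icc.1 hx2.2
    have : x = 0 := by push_cast at this; omega
    rwa [this] at hx
  exact (Finset.mem_inter.1 this).1

lemma ccs_singleton : IsCCS ({0} : Finset ℤ).card ({0} : Finset ℤ) := by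
  refine ⟨rfl, ?_, ?_⟩
  · intro x hx; simp at hx; subst hx; simp
  · intro i hi
    simp only [Finset.card_singleton] at hi
    interval_cases i
    simp

lemma cnt_ge {n : ℕ} {S : Finset ℤ} (h : IsCCS n S) {k : ℕ} (hk : k ≤ n - 1) :
    k + 1 ≤ cnt S k := by
  have := h.2.2 k hk
  unfold cnt; omega

lemma subset_Icc {n : ℕ} {S : Finset ℤ} (h : IsCCS n S) (hn : 1 ≤ n) :
    S ⊆ Finset.Icc (-((n-1:ℕ):ℤ)) ((n-1:ℕ):ℤ) := by
  intro x hx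
  have := h.2.1 x hx
  rw [Finset.mem_Icc]
  push_cast [hn]
  omega

lemma cnt_top {n : ℕ} {S : Finset ℤ} (h : IsCCS n S) (hn : 1 ≤ n) :
    cnt S (n - 1) = n := by
  unfold cnt
  rw [Finset.inter_eq_left.2 (subset_Icc h hn), h.1]

end CCS4


namespace CCS4

lemma concat_inter_small {n1 : ℕ} {S1 S2 : Finset ℤ} (h1 : IsCCS n1 S1)
    (hn1 : 1 ≤ n1) {j : ℕ} (hj : j ≤ n1 - 1) :
    ccsConcat S1 S2 ∩ Finset.Icc (-(j:ℤ)) (j:ℤ) = S1 ∩ Finset.Icc (-(j:ℤ)) (j:ℤ) := by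
  have hcard : (S1.card : ℤ) = (n1:ℤ) := by rw [h1.1]
  ext x
  simp only [ccsConcat, Finset.mem_inter, Finset.mem_union, Finset.mem_image, Finset.mem_Icc]
  constructor
  · rintro ⟨hx | ⟨y, hy, rfl⟩, hb⟩
    · exact ⟨hx, hb⟩
    · rcases eq_or_ne y 0 with rfl | hy0
      · have h0 : dil ((S1.card:ℤ)-1) 0 = 0 := by simp [dil]
        rw [h0] at hb ⊢
        exact ⟨zero_mem_ccs h1 hn1, hb⟩
      · exfalso
        simp only [dil, hcard] at hb
        split_ifs at hb <;> omega
  · rintro ⟨hx, hb⟩; exact ⟨Or.inl hx, hb⟩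

lemma cnt_concat_small {n1 : ℕ} {S1 S2 : Finset ℤ} (h1 : IsCCS n1 S1)
    (hn1 : 1 ≤ n1) {j : ℕ} (hj : j ≤ n1 - 1) :
    cnt (ccsConcat S1 S2) j = cnt S1 j := by
  unfold cnt; rw [concat_inter_small h1 hn1 hj]

lemma concat_inter_big {n1 n2 : ℕ} {S1 S2 : Finset ℤ} (h1 : IsCCS n1 S1)
    (h2 : IsCCS n2 S2) (hn1 : 1 ≤ n1) (hn2 : 1 ≤ n2) (i : ℕ) :
    ccsConcat S1 S2 ∩ Finset.Icc (-((n1-1+i:ℕ):ℤ)) ((n1-1+i:ℕ):ℤ)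
      = S1 ∪ (S2 ∩ Finset.Icc (-(i:ℤ)) (i:ℤ)).image (dil ((S1.card:ℤ)-1)) := by
  have hcard : (S1.card : ℤ) = (n1:ℤ) := by rw [h1.1]
  ext x
  simp only [ccsConcat, Finset.mem_inter, Finset.mem_union, Finset.mem_image, Finset.mem_Icc]
  constructor
  · rintro ⟨hx | ⟨y, hy, rfl⟩, hb⟩
    · exact Or.inl hx
    · refine Or.inr ⟨y, ⟨hy, ?_⟩, rfl⟩
      simp only [dil, hcard] at hb
      split_ifs at hb <;> push_cast at hb ⊢ <;> omega
  · rintro (hx | ⟨y, ⟨hy, hyb⟩, rfl⟩)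
    · refine ⟨Or.inl hx, ?_⟩
      have := h1.2.1 x hx
      push_cast [hn1]
      omega
    · refine ⟨Or.inr ⟨y, hy, rfl⟩, ?_⟩
      simp only [dil, hcard]
      split_ifs <;> push_cast [hn1] at hyb ⊢ <;> omega

lemma inter_img_eq {n1 n2 : ℕ} {S1 S2 : Finset ℤ} (h1 : IsCCS n1 S1)
    (h2 : IsCCS n2 S2) (hn1 : 1 ≤ n1) (hn2 : 1 ≤ n2) (i : ℕ) :
    S1 ∩ (S2 ∩ Finset.Icc (-(i:ℤ)) (i:ℤ)).image (dil ((S1.card:ℤ)-1)) = {0} := by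
  have hcard : (S1.card : ℤ) = (n1:ℤ) := by rw [h1.1]
  ext x
  simp only [Finset.mem_inter, Finset.mem_image, Finset.mem_Icc, Finset.mem_singleton]
  constructor
  · rintro ⟨hx, y, ⟨hy, hyb⟩, rfl⟩
    have hxb := h1.2.1 _ hx
    simp only [dil, hcard] at hxb ⊢
    split_ifs at hxb ⊢ <;> omega
  · rintro rfl
    refine ⟨zero_mem_ccs h1 hn1, 0, ⟨zero_mem_ccs h2 hn2, by omega⟩, by simp [dil]⟩

lemma cnt_concat_big {n1 n2 : ℕ} {S1 S2 : Finset ℤ} (h1 : IsCCS n1 S1)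
    (h2 : IsCCS n2 S2) (hn1 : 1 ≤ n1) (hn2 : 1 ≤ n2) (i : ℕ) :
    cnt (ccsConcat S1 S2) (n1 - 1 + i) + 1 = n1 + cnt S2 i := by
  unfold cnt
  rw [concat_inter_big h1 h2 hn1 hn2 i]
  have hk : (0:ℤ) ≤ (S1.card:ℤ) - 1 := by rw [h1.1]; push_cast; omega
  have himg : ((S2 ∩ Finset.Icc (-(i:ℤ)) (i:ℤ)).image (dil ((S1.card:ℤ)-1))).card
      = (S2 ∩ Finset.Icc (-(i:ℤ)) (i:ℤ)).card :=
    Finset.card_image_of_injective _ (dil_inj hk)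
  have := Finset.card_union_add_card_inter S1
    ((S2 ∩ Finset.Icc (-(i:ℤ)) (i:ℤ)).image (dil ((S1.card:ℤ)-1)))
  rw [inter_img_eq h1 h2 hn1 hn2 i, himg] at this
  simp only [Finset.card_singleton] at this
  have hcS : S1.card = n1 := h1.1
  omega

lemma concat_bounds {n1 n2 : ℕ} {S1 S2 : Finset ℤ} (h1 : IsCCS n1 S1)
    (h2 : IsCCS n2 S2) (hn1 : 1 ≤ n1) (hn2 : 1 ≤ n2) :
    ∀ x ∈ ccsConcat S1 S2,
      -((n1+n2-1:ℕ):ℤ) + 1 ≤ x ∧ x ≤ ((n1+n2-1:ℕ):ℤ) - 1 := by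
  have hcard : (S1.card : ℤ) = (n1:ℤ) := by rw [h1.1]
  intro x hx
  simp only [ccsConcat, Finset.mem_union, Finset.mem_image] at hx
  rcases hx with hx | ⟨y, hy, rfl⟩
  · have := h1.2.1 x hx; push_cast [hn1, hn2]; omega
  · have := h2.2.1 y hy
    simp only [dil, hcard]
    split_ifs <;> push_cast [hn1, hn2] <;> omega

lemma ccs_concat {n1 n2 : ℕ} {S1 S2 : Finset ℤ} (h1 : IsCCS n1 S1)
    (h2 : IsCCS n2 S2) (hn1 : 1 ≤ n1) (hn2 : 1 ≤ n2) :
    IsCCS (n1 + n2 - 1) (ccsConcat S1 S2) := by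
  have hcardC : (ccsConcat S1 S2).card = n1 + n2 - 1 := by
    have hco := cnt_concat_big h1 h2 hn1 hn2 (n2 - 1)
    rw [cnt_top h2 hn2] at hco
    have hsub : ccsConcat S1 S2 ⊆
        Finset.Icc (-((n1-1+(n2-1):ℕ):ℤ)) ((n1-1+(n2-1):ℕ):ℤ) := by
      intro x hx
      have := concat_bounds h1 h2 hn1 hn2 x hx
      rw [Finset.mem_Icc]; push_cast [hn1, hn2] at this ⊢; omega
    have : cnt (ccsConcat S1 S2) (n1-1+(n2-1)) = (ccsConcat S1 S2).card := by
      unfold cnt; rw [Finset.inter_eq_left.2 hsub]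
    omega
  refine ⟨hcardC, concat_bounds h1 h2 hn1 hn2, ?_⟩
  intro i hi
  rcases le_or_gt i (n1 - 1) with hsm | hbg
  · have := cnt_concat_small (S2 := S2) h1 hn1 hsm
    have := cnt_ge h1 hsm
    unfold cnt at *
    omega
  · have hi' : i = n1 - 1 + (i - (n1 - 1)) := by omega
    have hbig := cnt_concat_big h1 h2 hn1 hn2 (i - (n1 - 1))
    have hge := cnt_ge h2 (k := i - (n1-1)) (by omega)
    rw [← hi'] at hbig
    unfold cnt at *
    push_cast
    omega

end CCS4


namespace CCS4

noncomputable def splitLeft (S : Finset ℤ) (k : ℕ) : Finset ℤ := S ∩ Finset.Icc (-(k:ℤ)) (k:ℤ)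

noncomputable def splitRight (S : Finset ℤ) (k : ℕ) : Finset ℤ :=
  insert 0 ((S \ Finset.Icc (-(k:ℤ)) (k:ℤ)).image (dil (-(k:ℤ))))

lemma image_dil_neg_card {k : ℕ} {B : Finset ℤ}
    (hB : ∀ x ∈ B, (k:ℤ) < x ∨ x < -(k:ℤ)) :
    (B.image (dil (-(k:ℤ)))).card = B.card ∧ (0:ℤ) ∉ B.image (dil (-(k:ℤ))) := by
  constructor
  · apply Finset.card_image_of_injOn
    intro x hx y hy hxy
    have hx' := dil_cancel' x (hB x hx)
    have hy' := dil_cancel' y (hB y hy)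
    rw [← hx', ← hy', hxy]
  · intro h0
    simp only [Finset.mem_image] at h0
    obtain ⟨y, hy, hy0⟩ := h0
    have := dil_cancel' y (hB y hy)
    rw [hy0] at this
    simp only [dil, if_pos, if_neg] at this
    have := hB y hy
    simp only [dil] at hy0
    split_ifs at hy0 <;> omega

lemma sdiff_bounds {S : Finset ℤ} {k : ℕ} :
    ∀ x ∈ S \ Finset.Icc (-(k:ℤ)) (k:ℤ), (k:ℤ) < x ∨ x < -(k:ℤ) := by
  intro x hx
  have := Finset.mem_sdiff.1 hx
  have := this.2
  simp only [Finset.mem_Icc] at this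
  omega

lemma splitLeft_ccs {n : ℕ} {S : Finset ℤ} (h : IsCCS n S) {k : ℕ}
    (hk : k ≤ n - 1) (hcut : cnt S k = k + 1) :
    IsCCS (k + 1) (splitLeft S k) := by
  refine ⟨hcut, ?_, ?_⟩
  · intro x hx
    have := Finset.mem_Icc.1 (Finset.mem_inter.1 hx).2
    push_cast
    omega
  · intro i hi
    have hi' : i ≤ k := by omega
    have hIcc : Finset.Icc (-(i:ℤ)) (i:ℤ) ⊆ Finset.Icc (-(k:ℤ)) (k:ℤ) := by
      apply Finset.Icc_subset_Icc <;> push_cast <;> omega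
    have : splitLeft S k ∩ Finset.Icc (-(i:ℤ)) (i:ℤ) = S ∩ Finset.Icc (-(i:ℤ)) (i:ℤ) := by
      unfold splitLeft
      rw [Finset.inter_assoc, Finset.inter_eq_right.2 hIcc]
    rw [this]
    exact h.2.2 i (by omega)

lemma cnt_splitRight {n : ℕ} {S : Finset ℤ} (h : IsCCS n S) {k : ℕ}
    (hk1 : 1 ≤ k) (hk : k ≤ n - 1) (hcut : cnt S k = k + 1) (i : ℕ) :
    cnt (splitRight S k) i + (k + 1) = 1 + cnt S (k + i) := by
  have hset : splitRight S k ∩ Finset.Icc (-(i:ℤ)) (i:ℤ)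
      = insert 0 (((S ∩ Finset.Icc (-((k+i:ℕ)):ℤ) ((k+i:ℕ):ℤ)) \
          Finset.Icc (-(k:ℤ)) (k:ℤ)).image (dil (-(k:ℤ)))) := by
    ext x
    simp only [splitRight, Finset.mem_inter, Finset.mem_insert, Finset.mem_image,
      Finset.mem_sdiff, Finset.mem_Icc]
    constructor
    · rintro ⟨rfl | ⟨y, ⟨hyS, hyI⟩, rfl⟩, hb⟩
      · exact Or.inl rfl
      · refine Or.inr ⟨y, ⟨⟨hyS, ?_⟩, hyI⟩, rfl⟩
        simp only [dil] at hb
        split_ifs at hb <;> push_cast at hb ⊢ <;> omega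
    · rintro (rfl | ⟨y, ⟨⟨hyS, hyb⟩, hyI⟩, rfl⟩)
      · exact ⟨Or.inl rfl, by omega⟩
      · refine ⟨Or.inr ⟨y, ⟨hyS, hyI⟩, rfl⟩, ?_⟩
        simp only [dil]
        split_ifs <;> push_cast at hyb ⊢ <;> omega
  have hB : ∀ x ∈ (S ∩ Finset.Icc (-((k+i:ℕ)):ℤ) ((k+i:ℕ):ℤ)) \
      Finset.Icc (-(k:ℤ)) (k:ℤ), (k:ℤ) < x ∨ x < -(k:ℤ) := sdiff_bounds
  obtain ⟨hcardim, h0im⟩ := image_dil_neg_card hB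
  have hsd : ((S ∩ Finset.Icc (-((k+i:ℕ)):ℤ) ((k+i:ℕ):ℤ)) \
      Finset.Icc (-(k:ℤ)) (k:ℤ)).card + (k+1)
      = (S ∩ Finset.Icc (-((k+i:ℕ)):ℤ) ((k+i:ℕ):ℤ)).card := by
    have hinter : (S ∩ Finset.Icc (-((k+i:ℕ)):ℤ) ((k+i:ℕ):ℤ)) ∩
        Finset.Icc (-(k:ℤ)) (k:ℤ) = S ∩ Finset.Icc (-(k:ℤ)) (k:ℤ) := by
      have hsub : Finset.Icc (-(k:ℤ)) (k:ℤ) ⊆ Finset.Icc (-((k+i:ℕ)):ℤ) ((k+i:ℕ):ℤ) := by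
        apply Finset.Icc_subset_Icc <;> push_cast <;> omega
      rw [Finset.inter_assoc, Finset.inter_eq_right.2 hsub]
    have := Finset.card_sdiff_add_card_inter
      (S ∩ Finset.Icc (-((k+i:ℕ)):ℤ) ((k+i:ℕ):ℤ)) (Finset.Icc (-(k:ℤ)) (k:ℤ))
    rw [hinter] at this
    have hcut' : (S ∩ Finset.Icc (-(k:ℤ)) (k:ℤ)).card = k + 1 := hcut
    omega
  unfold cnt
  rw [hset, Finset.card_insert_of_notMem h0im, hcardim]
  omega

lemma splitRight_card {n : ℕ} {S : Finset ℤ} (h : IsCCS n S) {k : ℕ}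
    (hk : k ≤ n - 1) (hcut : cnt S k = k + 1) (hn : 1 ≤ n) :
    (splitRight S k).card = n - k := by
  obtain ⟨hcardim, h0im⟩ := image_dil_neg_card (sdiff_bounds (S := S) (k := k))
  have hsd : (S \ Finset.Icc (-(k:ℤ)) (k:ℤ)).card + (k+1) = n := by
    have := Finset.card_sdiff_add_card_inter S (Finset.Icc (-(k:ℤ)) (k:ℤ))
    unfold cnt at hcut
    rw [h.1] at this
    omega
  unfold splitRight
  rw [Finset.card_insert_of_notMem h0im, hcardim]
  omega

lemma splitRight_ccs {n : ℕ} {S : Finset ℤ} (h : IsCCS n S) {k : ℕ}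
    (hk1 : 1 ≤ k) (hk : k ≤ n - 1) (hcut : cnt S k = k + 1) :
    IsCCS (n - k) (splitRight S k) := by
  have hn : 1 ≤ n := by omega
  refine ⟨splitRight_card h hk hcut hn, ?_, ?_⟩
  · intro x hx
    simp only [splitRight, Finset.mem_insert, Finset.mem_image] at hx
    rcases hx with rfl | ⟨y, hy, rfl⟩
    · push_cast [show k ≤ n by omega]; omega
    · have hyb := h.2.1 y (Finset.mem_sdiff.1 hy).1
      have hyI := sdiff_bounds y hy
      simp only [dil]
      split_ifs <;> push_cast [hn, show k ≤ n by omega] <;> omega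
  · intro i hi
    have := cnt_splitRight h hk1 hk hcut i
    have hge := cnt_ge h (k := k + i) (by omega)
    unfold cnt at *
    omega

lemma split_concat {n : ℕ} {S : Finset ℤ} (h : IsCCS n S) {k : ℕ}
    (hk1 : 1 ≤ k) (hk : k ≤ n - 1) (hcut : cnt S k = k + 1) :
    S = ccsConcat (splitLeft S k) (splitRight S k) := by
  have hn : 1 ≤ n := by omega
  have hcardL : (splitLeft S k).card = k + 1 := hcut
  have hshift : ((splitLeft S k).card : ℤ) - 1 = (k : ℤ) := by rw [hcardL]; push_cast; omega
  unfold ccsConcat splitRight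
  rw [hshift, Finset.image_insert]
  have h0 : dil (k:ℤ) 0 = 0 := by simp [dil]
  rw [h0, Finset.image_image]
  have himg : (S \ Finset.Icc (-(k:ℤ)) (k:ℤ)).image (dil (k:ℤ) ∘ dil (-(k:ℤ)))
      = S \ Finset.Icc (-(k:ℤ)) (k:ℤ) := by
    rw [Finset.image_congr (g := id), Finset.image_id]
    intro x hx
    exact dil_cancel' x (sdiff_bounds x hx)
  rw [himg]
  ext x
  simp only [splitLeft, Finset.mem_union, Finset.mem_insert, Finset.mem_inter,
    Finset.mem_sdiff, Finset.mem_Icc]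
  constructor
  · intro hx
    by_cases hb : -(k:ℤ) ≤ x ∧ x ≤ (k:ℤ)
    · exact Or.inl ⟨hx, hb⟩
    · exact Or.inr (Or.inr ⟨hx, hb⟩)
  · rintro (⟨hx, _⟩ | rfl | ⟨hx, _⟩)
    · exact hx
    · exact zero_mem_ccs h hn
    · exact hx

lemma recover_left {n1 n2 : ℕ} {S1 S2 : Finset ℤ} (h1 : IsCCS n1 S1)
    (h2 : IsCCS n2 S2) (hn1 : 1 ≤ n1) (hn2 : 1 ≤ n2) :
    splitLeft (ccsConcat S1 S2) (n1 - 1) = S1 := by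
  unfold splitLeft
  rw [concat_inter_small h1 hn1 le_rfl]
  exact Finset.inter_eq_left.2 (subset_Icc h1 hn1)

lemma recover_right {n1 n2 : ℕ} {S1 S2 : Finset ℤ} (h1 : IsCCS n1 S1)
    (h2 : IsCCS n2 S2) (hn1 : 1 ≤ n1) (hn2 : 1 ≤ n2) :
    splitRight (ccsConcat S1 S2) (n1 - 1) = S2 := by
  have hcard : (S1.card : ℤ) - 1 = ((n1 - 1 : ℕ) : ℤ) := by
    rw [h1.1]; push_cast [hn1]; omega
  have hkz : (0:ℤ) ≤ ((n1-1:ℕ):ℤ) := by positivity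
  ext x
  simp only [splitRight, Finset.mem_insert, Finset.mem_image, Finset.mem_sdiff,
    ccsConcat, Finset.mem_union, Finset.mem_Icc]
  constructor
  · rintro (rfl | ⟨y, ⟨hyC, hyI⟩, rfl⟩)
    · exact zero_mem_ccs h2 hn2
    · rcases hyC with hyS1 | ⟨z, hz, rfl⟩
      · exfalso
        have := h1.2.1 y hyS1
        push_cast [hn1] at this hyI
        omega
      · have hz0 : z ≠ 0 := by
          rintro rfl
          apply hyI
          simp only [dil]
          norm_num
        rw [hcard, dil_cancel hkz z]
        exact hz
  · intro hx
    rcases eq_or_ne x 0 with rfl | hx0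
    · exact Or.inl rfl
    · refine Or.inr ⟨dil ((S1.card:ℤ)-1) x, ⟨Or.inr ⟨x, hx, rfl⟩, ?_⟩, ?_⟩
      · rw [hcard]
        simp only [dil]
        split_ifs <;> push_cast <;> omega
      · rw [hcard, dil_cancel hkz x]

end CCS4


namespace CCS4

lemma dil_dil {a b : ℤ} (ha : 0 ≤ a) (hb : 0 ≤ b) (x : ℤ) :
    dil a (dil b x) = dil (a + b) x := by
  simp only [dil]; split_ifs <;> omega

lemma ccs_assoc {t a r : ℕ} {T A R : Finset ℤ} (hT : IsCCS t T) (hA : IsCCS a A)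
    (hR : IsCCS r R) (ht : 1 ≤ t) (ha : 1 ≤ a) (hr : 1 ≤ r) :
    ccsConcat (ccsConcat T A) R = ccsConcat T (ccsConcat A R) := by
  have hTA := ccs_concat hT hA ht ha
  have hcTA : (ccsConcat T A).card = t + a - 1 := hTA.1
  have hcT : T.card = t := hT.1
  have hcA : A.card = a := hA.1
  have key : R.image (dil (((ccsConcat T A).card:ℤ) - 1))
      = (R.image (dil ((A.card:ℤ)-1))).image (dil ((T.card:ℤ)-1)) := by
    rw [Finset.image_image]
    apply Finset.image_congr
    intro x hx
    simp only [Function.comp]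
    rw [dil_dil (by rw [hcT]; push_cast; omega) (by rw [hcA]; push_cast; omega)]
    congr 1
    rw [hcTA, hcT, hcA]; push_cast [ht, ha]; omega
  show (T ∪ A.image (dil ((T.card:ℤ)-1))) ∪ R.image (dil (((ccsConcat T A).card:ℤ)-1))
      = T ∪ (A ∪ R.image (dil ((A.card:ℤ)-1))).image (dil ((T.card:ℤ)-1))
  rw [key, Finset.image_union, Finset.union_assoc]

lemma concat_zero_left {S : Finset ℤ} (h0 : (0:ℤ) ∈ S) : ccsConcat {0} S = S := by
  unfold ccsConcat
  have h1 : ((({0}:Finset ℤ).card:ℤ) - 1) = 0 := by simp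
  rw [h1, dil_zero, Finset.image_id]
  exact Finset.union_eq_right.2 (by simpa)

lemma concat_right_zero {S : Finset ℤ} (h0 : (0:ℤ) ∈ S) : ccsConcat S {0} = S := by
  unfold ccsConcat
  rw [Finset.image_singleton]
  have h1 : dil ((S.card:ℤ)-1) 0 = 0 := by simp [dil]
  rw [h1]
  exact Finset.union_eq_left.2 (by simpa)

lemma fold_props : ∀ (L : List (Finset ℤ)), (∀ T ∈ L, IsCCS T.card T ∧ 2 ≤ T.card) →
    ∀ T : Finset ℤ, IsCCS T.card T → 1 ≤ T.card →
    IsCCS (L.foldl ccsConcat T).card (L.foldl ccsConcat T) ∧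
    T.card ≤ (L.foldl ccsConcat T).card ∧
    L.foldl ccsConcat T = ccsConcat T (L.foldl ccsConcat {0}) := by
  intro L
  induction L with
  | nil =>
    intro _ T hT hT1
    refine ⟨hT, le_rfl, ?_⟩
    simp only [List.foldl_nil]
    exact (concat_right_zero (zero_mem_ccs hT hT1)).symm
  | cons A L ih =>
    intro hmem T hT hT1
    obtain ⟨hA, hA2⟩ := hmem A (List.mem_cons_self)
    have hmem' : ∀ T ∈ L, IsCCS T.card T ∧ 2 ≤ T.card :=
      fun T h => hmem T (List.mem_cons_of_mem _ h)
    have hTA : IsCCS (T.card + A.card - 1) (ccsConcat T A) :=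
      ccs_concat hT hA hT1 (by omega)
    have hTAcard : (ccsConcat T A).card = T.card + A.card - 1 := hTA.1
    have hTA' : IsCCS (ccsConcat T A).card (ccsConcat T A) := by
      rw [hTAcard]; exact hTA
    have ih1 := ih hmem' (ccsConcat T A) hTA' (by omega)
    have ihA := ih hmem' A hA (by omega)
    have ihR := ih hmem' {0} ccs_singleton (by simp)
    have hR1 : 1 ≤ (L.foldl ccsConcat {0}).card := by
      have := ihR.2.1; simpa using this
    simp only [List.foldl_cons]
    rw [concat_zero_left (zero_mem_ccs hA (by omega))]
    refine ⟨ih1.1, le_trans (by omega) ih1.2.1, ?_⟩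
    rw [ih1.2.2, ihA.2.2]
    exact ccs_assoc hT hA ihR.1 hT1 (by omega) hR1

lemma fold_card_ge {C : Finset ℤ} {L : List (Finset ℤ)}
    (hmem : ∀ T ∈ C :: L, IsCCS T.card T ∧ 2 ≤ T.card) :
    2 ≤ ((C :: L).foldl ccsConcat {0}).card := by
  obtain ⟨hC, hC2⟩ := hmem C (List.mem_cons_self)
  have hmem' : ∀ T ∈ L, IsCCS T.card T ∧ 2 ≤ T.card :=
    fun T h => hmem T (List.mem_cons_of_mem _ h)
  have := (fold_props L hmem' C hC (by omega)).2.1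
  simp only [List.foldl_cons]
  rw [concat_zero_left (zero_mem_ccs hC (by omega))]
  omega

lemma irred_of_nocut {n : ℕ} {S : Finset ℤ} (h : IsCCS n S) (hn : 2 ≤ n)
    (hnc : ∀ k, 1 ≤ k → k ≤ n - 2 → cnt S k ≠ k + 1) : IsIrredCCS S := by
  have hcS : S.card = n := h.1
  refine ⟨by rw [hcS]; exact h, ?_⟩
  rintro ⟨S1, S2, h1, h2, hc1, hc2, hconcat⟩
  have hkey := cnt_concat_small (S2 := S2) h1 (by omega) (le_refl (S1.card - 1))
  rw [cnt_top h1 (by omega)] at hkey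
  have hcC : (ccsConcat S1 S2).card = S1.card + S2.card - 1 :=
    (ccs_concat h1 h2 (by omega) (by omega)).1
  rw [← hconcat] at hkey hcC
  exact hnc (S1.card - 1) (by omega) (by omega) (by omega)

lemma reducible_of_cut {S : Finset ℤ} (h : IsCCS S.card S) {k : ℕ}
    (hk1 : 1 ≤ k) (hk : k ≤ S.card - 2) (hcut : cnt S k = k + 1) :
    ∃ S1 S2, IsCCS S1.card S1 ∧ IsCCS S2.card S2 ∧ 2 ≤ S1.card ∧ 2 ≤ S2.card ∧
      S = ccsConcat S1 S2 ∧ S1 = splitLeft S k ∧ S2 = splitRight S k := by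
  have hn : 2 ≤ S.card := by omega
  have hL := splitLeft_ccs h (by omega) hcut
  have hR := splitRight_ccs h hk1 (by omega) hcut
  have hLc : (splitLeft S k).card = k + 1 := hL.1
  have hRc : (splitRight S k).card = S.card - k := hR.1
  refine ⟨splitLeft S k, splitRight S k, by rw [hLc]; exact hL,
    by rw [hRc]; exact hR, by omega, by omega,
    split_concat h hk1 (by omega) hcut, rfl, rfl⟩

lemma cnt_splitLeft {S : Finset ℤ} {k j : ℕ} (hj : j ≤ k) :
    cnt (splitLeft S k) j = cnt S j := by
  unfold cnt splitLeft
  congr 1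
  have hsub : Finset.Icc (-(j:ℤ)) (j:ℤ) ⊆ Finset.Icc (-(k:ℤ)) (k:ℤ) := by
    apply Finset.Icc_subset_Icc <;> push_cast <;> omega
  rw [Finset.inter_assoc, Finset.inter_eq_right.2 hsub]

lemma first_factor_cut {S A R : Finset ℤ} (hA : IsIrredCCS A) (hA2 : 2 ≤ A.card)
    (hS : S = ccsConcat A R) :
    cnt S (A.card - 1) = A.card ∧
    (∀ j, 1 ≤ j → j < A.card - 1 → cnt S j ≠ j + 1) := by
  have hAc := hA.1
  constructor
  · rw [hS, cnt_concat_small hAc (by omega) le_rfl, cnt_top hAc (by omega)]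
  · intro j hj1 hj2 hcut
    rw [hS, cnt_concat_small hAc (by omega) (by omega)] at hcut
    obtain ⟨S1, S2, p1, p2, p3, p4, p5, _, _⟩ :=
      reducible_of_cut hAc hj1 (by omega) hcut
    exact hA.2 ⟨S1, S2, p1, p2, p3, p4, p5⟩

end CCS4


namespace CCS4

lemma exists_fact : ∀ n : ℕ, ∀ S : Finset ℤ, IsCCS S.card S → S.card = n → 2 ≤ n →
    ∃ L : List (Finset ℤ), (∀ T ∈ L, IsIrredCCS T ∧ 2 ≤ T.card) ∧
      S = L.foldl ccsConcat {0} := by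
  intro n
  induction n using Nat.strong_induction_on with
  | _ n ih =>
    intro S hS hcard hn
    by_cases hirr : ∀ k, 1 ≤ k → k ≤ n - 2 → cnt S k ≠ k + 1
    · refine ⟨[S], ?_, ?_⟩
      · intro T hT
        rw [List.mem_singleton] at hT
        subst hT
        exact ⟨irred_of_nocut (hcard ▸ hS) hn hirr, by omega⟩
      · simp only [List.foldl_cons, List.foldl_nil]
        exact (concat_zero_left (zero_mem_ccs hS (by omega))).symm
    · push_neg at hirr
      obtain ⟨k, hk1, hk2, hcut⟩ := hirr
      have hex : ∃ k, 1 ≤ k ∧ k ≤ n - 2 ∧ cnt S k = k + 1 := ⟨k, hk1, hk2, hcut⟩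
      classical
      obtain ⟨hk01, hk02, hcut0⟩ := Nat.find_spec hex
      set k0 := Nat.find hex with hk0def
      have hmin : ∀ j, j < k0 → ¬(1 ≤ j ∧ j ≤ n - 2 ∧ cnt S j = j + 1) :=
        fun j hj => Nat.find_min hex hj
      have hScard : IsCCS n S := hcard ▸ hS
      have hL := splitLeft_ccs hScard (by omega) hcut0
      have hR := splitRight_ccs hScard hk01 (by omega) hcut0
      have hLc : (splitLeft S k0).card = k0 + 1 := hL.1
      have hRc : (splitRight S k0).card = n - k0 := hR.1
      have hLccs : IsCCS (splitLeft S k0).card (splitLeft S k0) := by rw [hLc]; exact hL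
      have hRccs : IsCCS (splitRight S k0).card (splitRight S k0) := by rw [hRc]; exact hR
      have hLirr : IsIrredCCS (splitLeft S k0) := by
        apply irred_of_nocut hL (by omega)
        intro j hj1 hj2 hcontra
        rw [cnt_splitLeft (by omega)] at hcontra
        exact hmin j (by omega) ⟨hj1, by omega, hcontra⟩
      obtain ⟨L2, hL2mem, hL2⟩ := ih (n - k0) (by omega) (splitRight S k0) hRccs hRc (by omega)
      refine ⟨splitLeft S k0 :: L2, ?_, ?_⟩
      · intro T hT
        rcases List.mem_cons.1 hT with rfl | hT
        · exact ⟨hLirr, by omega⟩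
        · exact hL2mem T hT
      · have hL2mem' : ∀ T ∈ L2, IsCCS T.card T ∧ 2 ≤ T.card :=
          fun T h => ⟨(hL2mem T h).1.1, (hL2mem T h).2⟩
        have hfold := (fold_props L2 hL2mem' (splitLeft S k0) hLccs (by omega)).2.2
        simp only [List.foldl_cons]
        rw [concat_zero_left (zero_mem_ccs hL (by omega)), hfold, ← hL2]
        exact split_concat hScard hk01 (by omega) hcut0

lemma unique_fact : ∀ n : ℕ, ∀ S : Finset ℤ, S.card = n → 2 ≤ n →
    ∀ L M : List (Finset ℤ),
      (∀ T ∈ L, IsIrredCCS T ∧ 2 ≤ T.card) → S = L.foldl ccsConcat {0} →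
      (∀ T ∈ M, IsIrredCCS T ∧ 2 ≤ T.card) → S = M.foldl ccsConcat {0} → L = M := by
  intro n
  induction n using Nat.strong_induction_on with
  | _ n ih =>
    intro S hcard hn L M hLmem hLf hMmem hMf
    cases L with
    | nil =>
      exfalso
      simp only [List.foldl_nil] at hLf
      rw [hLf] at hcard
      simp at hcard
      omega
    | cons A L' =>
      cases M with
      | nil =>
        exfalso
        simp only [List.foldl_nil] at hMf
        rw [hMf] at hcard
        simp at hcard
        omega
      | cons B M' =>
        obtain ⟨hAirr, hA2⟩ := hLmem A (List.mem_cons_self)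
        obtain ⟨hBirr, hB2⟩ := hMmem B (List.mem_cons_self)
        have hmemL'' : ∀ T ∈ L', IsCCS T.card T ∧ 2 ≤ T.card :=
          fun T h => ⟨(hLmem T (List.mem_cons_of_mem _ h)).1.1,
            (hLmem T (List.mem_cons_of_mem _ h)).2⟩
        have hmemM'' : ∀ T ∈ M', IsCCS T.card T ∧ 2 ≤ T.card :=
          fun T h => ⟨(hMmem T (List.mem_cons_of_mem _ h)).1.1,
            (hMmem T (List.mem_cons_of_mem _ h)).2⟩
        set R := L'.foldl ccsConcat {0} with hRdef
        set R' := M'.foldl ccsConcat {0} with hR'def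
        have hfoldL := fold_props L' hmemL'' A hAirr.1 (by omega)
        have hfoldM := fold_props M' hmemM'' B hBirr.1 (by omega)
        have hR0 := fold_props L' hmemL'' {0} ccs_singleton (by simp)
        have hR'0 := fold_props M' hmemM'' {0} ccs_singleton (by simp)
        have hRccs := hR0.1
        have hR'ccs := hR'0.1
        have hR1 : 1 ≤ R.card := by have := hR0.2.1; simpa using this
        have hR'1 : 1 ≤ R'.card := by have := hR'0.2.1; simpa using this
        have hSA : S = ccsConcat A R := by
          rw [hLf]
          simp only [List.foldl_cons]
          rw [concat_zero_left (zero_mem_ccs hAirr.1 (by omega))]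
          exact hfoldL.2.2
        have hSB : S = ccsConcat B R' := by
          rw [hMf]
          simp only [List.foldl_cons]
          rw [concat_zero_left (zero_mem_ccs hBirr.1 (by omega))]
          exact hfoldM.2.2
        have hcutA := first_factor_cut hAirr hA2 hSA
        have hcutB := first_factor_cut hBirr hB2 hSB
        have hABcard : A.card = B.card := by
          by_contra hne
          rcases Nat.lt_or_ge A.card B.card with hlt | hge
          · exact hcutB.2 (A.card - 1) (by omega) (by omega) (by omega)
          · exact hcutA.2 (B.card - 1) (by omega) (by omega) (by omega)
        have hAB : A = B := by
          have e1 := recover_left hAirr.1 hRccs (by omega) hR1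
          have e2 := recover_left hBirr.1 hR'ccs (by omega) hR'1
          rw [← hSA] at e1
          rw [← hSB] at e2
          rw [← e1, ← e2, hABcard]
        have hRR : R = R' := by
          have e1 := recover_right hAirr.1 hRccs (by omega) hR1
          have e2 := recover_right hBirr.1 hR'ccs (by omega) hR'1
          rw [← hSA] at e1
          rw [← hSB] at e2
          rw [hRdef, hR'def, ← e1, ← e2, hABcard]
        have hcardS : n = A.card + R.card - 1 := by
          have := (ccs_concat hAirr.1 hRccs (by omega) hR1).1
          rw [← hSA, ← hRdef] at this
          omega
        have hLM : L' = M' := by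
          rcases Nat.lt_or_ge R.card 2 with hsmall | hbig
          · have hLnil : L' = [] := by
              cases L' with
              | nil => rfl
              | cons C L'' =>
                exfalso
                have h2 := fold_card_ge hmemL''
                rw [← hRdef] at h2
                omega
            have hMnil : M' = [] := by
              cases M' with
              | nil => rfl
              | cons C M'' =>
                exfalso
                have h2 := fold_card_ge hmemM''
                rw [← hR'def] at h2
                rw [hRR] at hsmall
                omega
            rw [hLnil, hMnil]
          · have hLirrmem : ∀ T ∈ L', IsIrredCCS T ∧ 2 ≤ T.card :=
              fun T h => hLmem T (List.mem_cons_of_mem _ h)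
            have hMirrmem : ∀ T ∈ M', IsIrredCCS T ∧ 2 ≤ T.card :=
              fun T h => hMmem T (List.mem_cons_of_mem _ h)
            exact ih R.card (by omega) R rfl hbig L' M' hLirrmem hRdef hMirrmem
              (by rw [hRR])
        rw [hAB, hLM]

end CCS4



/-- Every centred Catalan set of size at least `2` can be written uniquely as a
concatenation of irreducible centred Catalan sets.  (The singleton `{0}` is the
neutral element for concatenation, so the concatenation of the list `L` is
`L.foldl ccsConcat {0}`.) -/
theorem stmt4 (S : Finset ℤ) (h : IsCCS S.card S) (h2 : 2 ≤ S.card) :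
    ∃! L : List (Finset ℤ),
      (∀ T ∈ L, IsIrredCCS T ∧ 2 ≤ T.card) ∧ S = L.foldl ccsConcat {0} := by
  obtain ⟨L, hLmem, hLf⟩ := CCS4.exists_fact S.card S h rfl h2
  refine ⟨L, ⟨hLmem, hLf⟩, ?_⟩
  rintro M ⟨hMmem, hMf⟩
  exact CCS4.unique_fact S.card S rfl h2 M L hMmem hMf hLmem hLf
end

section
/- For a centred Catalan set S of size n, the sequence (m_1(S), ..., m_{n-1}(S)) defined by m_i(S) = |{-i, i} ∩ S| - 1 is a Motzkin path of length n-1, i.e., each m_i ∈ {-1, 0, 1}, all partial sums are nonnegative, and the total sum is 0. -/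
open Finset

/-- For a centred Catalan set `S` of size `n`, the sequence with `i`-th entry
`|{-i,i} ∩ S| - 1` is a Motzkin path of length `n-1`. -/
theorem stmt5 (n : ℕ) (S : Finset ℤ) (h : IsCCS n S) :
    IsMotzkin (motz n S) ∧ (motz n S).length = n - 1 := by
  obtain ⟨hcard, hbound, hlow⟩ := h
  set c : ℕ → ℕ := fun j => (S ∩ Finset.Icc (-(j : ℤ)) (j : ℤ)).card with hc
  have h0 : (0 : ℤ) ∈ S := by
    have h1 := hlow 0 (Nat.zero_le _)
    by_contra h0
    have : S ∩ Finset.Icc (-(0:ℕ) : ℤ) ((0:ℕ) : ℤ) = ∅ := by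
      ext x
      simp only [Finset.mem_inter, Finset.mem_Icc, Finset.notMem_empty, iff_false]
      push_cast
      rintro ⟨hx, hx1, hx2⟩
      have : x = 0 := le_antisymm hx2 (by linarith)
      exact h0 (this ▸ hx)
    rw [this] at h1
    simp at h1
  have hc0 : c 0 = 1 := by
    have h01 : S ∩ ({0} : Finset ℤ) = {0} :=
      Finset.inter_eq_right.mpr (by simp [h0])
    simp [hc, h01]
  have hn1 : 1 ≤ n := by
    have := Finset.card_pos.mpr ⟨0, h0⟩
    omega
  set f : ℕ → ℤ := fun k =>
      ((S ∩ ({-((k : ℤ) + 1), (k : ℤ) + 1} : Finset ℤ)).card : ℤ) - 1 with hf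
  have hsplit : ∀ k : ℕ, Finset.Icc (-((k:ℕ)+1 : ℤ)) (((k:ℕ)+1 : ℤ)) =
      (Finset.Icc (-(k : ℤ)) (k : ℤ)) ∪ ({-((k : ℤ) + 1), (k : ℤ) + 1} : Finset ℤ) := by
    intro k
    ext x
    simp only [Finset.mem_Icc, Finset.mem_union, Finset.mem_insert, Finset.mem_singleton]
    omega
  have hstep : ∀ k : ℕ, (c (k+1) : ℤ) =
      (c k : ℤ) + ((S ∩ ({-((k : ℤ) + 1), (k : ℤ) + 1} : Finset ℤ)).card : ℤ) := by
    intro k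
    have heq : S ∩ Finset.Icc (-((k+1 : ℕ) : ℤ)) ((k+1 : ℕ) : ℤ) =
        (S ∩ Finset.Icc (-(k : ℤ)) (k : ℤ)) ∪
        (S ∩ ({-((k : ℤ) + 1), (k : ℤ) + 1} : Finset ℤ)) := by
      push_cast
      rw [hsplit k, Finset.inter_union_distrib_left]
    have hdisj : Disjoint (S ∩ Finset.Icc (-(k : ℤ)) (k : ℤ))
        (S ∩ ({-((k : ℤ) + 1), (k : ℤ) + 1} : Finset ℤ)) := by
      rw [Finset.disjoint_left]
      intro x hx1 hx2
      simp only [Finset.mem_inter, Finset.mem_Icc, Finset.mem_insert,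
        Finset.mem_singleton] at hx1 hx2
      omega
    simp only [hc]
    rw [heq, Finset.card_union_of_disjoint hdisj]
    push_cast
    ring
  have hfbound : ∀ k : ℕ, f k = -1 ∨ f k = 0 ∨ f k = 1 := by
    intro k
    have h2 : (S ∩ ({-((k : ℤ) + 1), (k : ℤ) + 1} : Finset ℤ)).card ≤ 2 := by
      calc (S ∩ ({-((k : ℤ) + 1), (k : ℤ) + 1} : Finset ℤ)).card
          ≤ ({-((k : ℤ) + 1), (k : ℤ) + 1} : Finset ℤ).card :=
            Finset.card_le_card Finset.inter_subset_right
        _ ≤ 2 := (Finset.card_insert_le _ _).trans (by simp)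
    simp only [hf]
    omega
  have hmotz : motz n S = (List.range (n-1)).map f := by
    unfold motz
    rw [show ((do let a ← List.range (n-1); pure ((a:ℤ))) : List ℤ)
        = (List.range (n-1)).map (Nat.cast : ℕ → ℤ) from List.map_eq_flatMap.symm,
      List.map_map]
    rfl
  have hlen : (motz n S).length = n - 1 := by simp [hmotz]
  have hsum' : ∀ j : ℕ, j ≤ n - 1 →
      ((List.range j).map f).sum = (c j : ℤ) - 1 - j := by
    intro j hj
    induction j with
    | zero => simp [hc0]
    | succ m ih =>
      rw [List.range_succ, List.map_append, List.sum_append]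
      rw [ih (by omega)]
      simp only [List.map_cons, List.map_nil, List.sum_cons, List.sum_nil, hf]
      have := hstep m
      push_cast
      omega
  have htake : ∀ k : ℕ, ((motz n S).take k).sum =
      (c (min k (n-1)) : ℤ) - 1 - (min k (n-1)) := by
    intro k
    rw [hmotz, ← List.map_take, List.take_range]
    exact hsum' _ (min_le_right _ _)
  have hlast : c (n - 1) = n := by
    have : S ∩ Finset.Icc (-((n-1 : ℕ) : ℤ)) (((n-1 : ℕ)) : ℤ) = S := by
      apply Finset.inter_eq_left.mpr
      intro x hx
      have := hbound x hx
      rw [Finset.mem_Icc]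
      omega
    simp [hc, this, hcard]
  refine ⟨⟨?_, ?_, ?_⟩, hlen⟩
  · intro x hx
    rw [hmotz] at hx
    simp only [List.mem_map, List.mem_range] at hx
    obtain ⟨k, _, rfl⟩ := hx
    exact hfbound k
  · intro k
    rw [htake k]
    set j := min k (n-1) with hj
    have hjle : j ≤ n - 1 := min_le_right _ _
    have := hlow j hjle
    simp only [hc] at *
    omega
  · have : (motz n S).sum = ((motz n S).take (n-1)).sum := by
      rw [List.take_of_length_le (by rw [hlen])]
    rw [this, htake]
    simp only [min_self]
    rw [hlast]
    omega
end

section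
/- The map from centred Catalan sets of size n to Motzkin paths of length n-1 given by S ↦ (|{-1,1} ∩ S| - 1, ..., |{-(n-1), n-1} ∩ S| - 1) is surjective. -/
open Finset

lemma motz_eq (n : ℕ) (S : Finset ℤ) : motz n S =
    (List.range (n - 1)).map
      (fun k : ℕ => ((S ∩ ({-((k : ℤ) + 1), (k : ℤ) + 1} : Finset ℤ)).card : ℤ) - 1) := by
  rw [motz, bind_pure_comp, List.map_eq_map, List.map_map]
  rfl

lemma take_sum_eq (M : List ℤ) (i : ℕ) :
    (M.take i).sum = ∑ k ∈ Finset.range i, M.getD k 0 := by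
  induction i with
  | zero => simp
  | succ i ih =>
    rw [Finset.sum_range_succ, ← ih, List.take_succ]
    by_cases h : i < M.length
    · simp [List.getD_eq_getElem, h, List.getElem?_eq_getElem h]
    · simp [List.getD_eq_default, not_lt.mp h, List.getElem?_eq_none (not_lt.mp h)]

/-- The map from centred Catalan sets of size `n` to Motzkin paths of length
`n-1` is surjective. -/
theorem stmt6 (n : ℕ) (hn : 1 ≤ n) (M : List ℤ) (hM : IsMotzkin M)
    (hlen : M.length = n - 1) :
    ∃ S : Finset ℤ, IsCCS n S ∧ motz n S = M := by
  classical
  obtain ⟨hmem, hpre, hsum⟩ := hM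
  set g : ℕ → ℤ := fun k => M.getD k 0 with hg
  have hgmem : ∀ k, g k = -1 ∨ g k = 0 ∨ g k = 1 := by
    intro k
    by_cases h : k < M.length
    · rw [hg]; simp only [List.getD_eq_getElem _ _ h]
      exact hmem _ (M.getElem_mem h)
    · right; left; show M.getD k 0 = 0
      rw [List.getD_eq_default _ _ (not_lt.mp h)]
  set A : ℕ → Finset ℤ := fun i =>
    ((Finset.range i).filter (fun k => 0 ≤ g k)).image (fun k : ℕ => (k : ℤ) + 1) with hA
  set B : ℕ → Finset ℤ := fun i =>
    ((Finset.range i).filter (fun k => g k = 1)).image (fun k : ℕ => -((k : ℤ) + 1)) with hB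
  set S : Finset ℤ := insert 0 (A (n - 1) ∪ B (n - 1)) with hS
  -- membership
  have hAmem : ∀ i (x : ℤ), x ∈ A i ↔ ∃ k, k < i ∧ 0 ≤ g k ∧ x = (k : ℤ) + 1 := by
    intro i x
    rw [hA]
    simp only [Finset.mem_image, Finset.mem_filter, Finset.mem_range]
    constructor
    · rintro ⟨k, ⟨h1, h2⟩, rfl⟩; exact ⟨k, h1, h2, rfl⟩
    · rintro ⟨k, h1, h2, rfl⟩; exact ⟨k, ⟨h1, h2⟩, rfl⟩
  have hBmem : ∀ i (x : ℤ), x ∈ B i ↔ ∃ k, k < i ∧ g k = 1 ∧ x = -((k : ℤ) + 1) := by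
    intro i x
    rw [hB]
    simp only [Finset.mem_image, Finset.mem_filter, Finset.mem_range]
    constructor
    · rintro ⟨k, ⟨h1, h2⟩, rfl⟩; exact ⟨k, h1, h2, rfl⟩
    · rintro ⟨k, h1, h2, rfl⟩; exact ⟨k, ⟨h1, h2⟩, rfl⟩
  -- card of insert 0 (A i ∪ B i)
  have hcard : ∀ i : ℕ, ((insert (0:ℤ) (A i ∪ B i)).card : ℤ)
      = 1 + i + (M.take i).sum := by
    intro i
    have h0 : (0:ℤ) ∉ A i ∪ B i := by
      simp only [Finset.mem_union, hAmem, hBmem]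
      push_neg
      constructor
      · intro k _ _ h; omega
      · intro k _ _ h; omega
    have hdisj : Disjoint (A i) (B i) := by
      rw [Finset.disjoint_left]
      intro x hx hx'
      rw [hAmem] at hx; rw [hBmem] at hx'
      obtain ⟨k, _, _, rfl⟩ := hx
      obtain ⟨k', _, _, h⟩ := hx'
      omega
    have hcA : (A i).card = ((Finset.range i).filter (fun k => 0 ≤ g k)).card := by
      rw [hA]; exact Finset.card_image_of_injective _ (fun a b h => by omega)
    have hcB : (B i).card = ((Finset.range i).filter (fun k => g k = 1)).card := by
      rw [hB]; exact Finset.card_image_of_injective _ (fun a b h => by omega)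
    have hkey : (((Finset.range i).filter (fun k => 0 ≤ g k)).card : ℤ)
        + (((Finset.range i).filter (fun k => g k = 1)).card : ℤ)
        = ∑ k ∈ Finset.range i, (g k + 1) := by
      rw [Finset.card_filter, Finset.card_filter]
      push_cast
      rw [← Finset.sum_add_distrib]
      exact Finset.sum_congr rfl fun k _ => by rcases hgmem k with h | h | h <;> simp [h]
    rw [Finset.card_insert_of_notMem h0, Finset.card_union_of_disjoint hdisj, hcA, hcB]
    push_cast
    rw [hkey, Finset.sum_add_distrib, Finset.sum_const, Finset.card_range, take_sum_eq]
    push_cast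
    ring
  -- intersection with Icc
  have hinter : ∀ i : ℕ, i ≤ n - 1 →
      S ∩ Finset.Icc (-(i : ℤ)) (i : ℤ) = insert 0 (A i ∪ B i) := by
    intro i hi
    ext x
    simp only [Finset.mem_inter, hS, Finset.mem_insert, Finset.mem_union, hAmem, hBmem,
      Finset.mem_Icc]
    constructor
    · rintro ⟨h1 | h1 | h1, h2, h3⟩
      · exact Or.inl h1
      · obtain ⟨k, hk1, hk2, rfl⟩ := h1
        exact Or.inr (Or.inl ⟨k, by omega, hk2, rfl⟩)
      · obtain ⟨k, hk1, hk2, rfl⟩ := h1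
        exact Or.inr (Or.inr ⟨k, by omega, hk2, rfl⟩)
    · rintro (rfl | ⟨k, hk1, hk2, rfl⟩ | ⟨k, hk1, hk2, rfl⟩)
      · exact ⟨Or.inl rfl, by omega, by omega⟩
      · exact ⟨Or.inr (Or.inl ⟨k, by omega, hk2, rfl⟩), by omega, by omega⟩
      · exact ⟨Or.inr (Or.inr ⟨k, by omega, hk2, rfl⟩), by omega, by omega⟩
  have htakefull : M.take (n - 1) = M := List.take_of_length_le (by omega)
  have hcardS : (S.card : ℤ) = n := by
    rw [hS, hcard, htakefull, hsum]
    push_cast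
    omega
  refine ⟨S, ⟨by exact_mod_cast hcardS, ?_, ?_⟩, ?_⟩
  · -- bounds
    intro x hx
    rw [hS, Finset.mem_insert, Finset.mem_union, hAmem, hBmem] at hx
    rcases hx with rfl | ⟨k, h1, _, rfl⟩ | ⟨k, h1, _, rfl⟩ <;> constructor <;> push_cast <;> omega
  · -- prefix condition
    intro i hi
    rw [hinter i hi, hcard]
    have := hpre i
    omega
  · -- motz n S = M
    rw [motz_eq]
    apply List.ext_getElem
    · simp only [List.length_map, List.length_range, hlen]
    · intro k h1 h2
      have hk : k < n - 1 := by
        simpa only [List.length_map, List.length_range] using h1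
      simp only [List.getElem_map, List.getElem_range]
      have hgk : M[k] = g k := by
        rw [hg]; exact (List.getD_eq_getElem M 0 h2).symm
      rw [hgk]
      have hxin : ((k : ℤ) + 1) ∈ S ↔ 0 ≤ g k := by
        rw [hS, Finset.mem_insert, Finset.mem_union, hAmem, hBmem]
        constructor
        · rintro (h | ⟨k', h1', h2', h3'⟩ | ⟨k', h1', h2', h3'⟩)
          · omega
          · have : k = k' := by omega
            subst this; exact h2'
          · omega
        · intro h; exact Or.inr (Or.inl ⟨k, hk, h, rfl⟩)
      have hyin : (-((k : ℤ) + 1)) ∈ S ↔ g k = 1 := by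
        rw [hS, Finset.mem_insert, Finset.mem_union, hAmem, hBmem]
        constructor
        · rintro (h | ⟨k', h1', h2', h3'⟩ | ⟨k', h1', h2', h3'⟩)
          · omega
          · omega
          · have : k = k' := by omega
            subst this; exact h2'
        · intro h; exact Or.inr (Or.inr ⟨k, hk, h, rfl⟩)
      rcases hgmem k with h | h | h
      · have he : S ∩ ({-((k : ℤ) + 1), (k : ℤ) + 1} : Finset ℤ) = ∅ := by
          ext x
          simp only [Finset.mem_inter, Finset.mem_insert, Finset.mem_singleton,
            Finset.notMem_empty, iff_false, not_and]
          rintro hxS (rfl | rfl)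
          · rw [hyin] at hxS; omega
          · rw [hxin] at hxS; omega
        rw [he]; simp [h]
      · have he : S ∩ ({-((k : ℤ) + 1), (k : ℤ) + 1} : Finset ℤ) = {(k : ℤ) + 1} := by
          ext x
          simp only [Finset.mem_inter, Finset.mem_insert, Finset.mem_singleton]
          constructor
          · rintro ⟨hxS, rfl | rfl⟩
            · rw [hyin] at hxS; omega
            · rfl
          · rintro rfl; exact ⟨hxin.mpr (by omega), Or.inr rfl⟩
        rw [he]; simp [h]
      · have he : S ∩ ({-((k : ℤ) + 1), (k : ℤ) + 1} : Finset ℤ)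
            = {-((k : ℤ) + 1), (k : ℤ) + 1} := by
          ext x
          simp only [Finset.mem_inter, Finset.mem_insert, Finset.mem_singleton,
            and_iff_right_iff_imp]
          rintro (rfl | rfl)
          · exact hyin.mpr h
          · exact hxin.mpr (by omega)
        rw [he, h]
        rw [Finset.card_insert_of_notMem (by simp; omega), Finset.card_singleton]
        norm_num
end

section
/- For every centred Catalan set S of size n there exists an alternating sign triangle A of order n such that the set of column labels of A with positive column-sum equals S. -/
open Finset

/-- For every centred Catalan set `S` of size `n` there is an AST `A` of order
`n` whose set of positive-sum column labels is `S`. -/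
theorem stmt9 (n : ℕ) (S : Finset ℤ) (h : IsCCS n S) :
    ∃ A : ℤ → ℤ → ℤ, IsAST n A ∧ astCols n A = S := by
  classical
  obtain ⟨hcard, hrange, hcat⟩ := h
  set L : List ℤ := S.toList.mergeSort (fun a b => decide (|a| ≤ |b|)) with hLdef
  have hperm : L.Perm S.toList := List.mergeSort_perm _ _
  have hlen : L.length = n := by rw [hperm.length_eq, Finset.length_toList, hcard]
  have hnodup : L.Nodup := hperm.nodup_iff.mpr S.nodup_toList
  have hmemL : ∀ x : ℤ, x ∈ L ↔ x ∈ S := fun x => by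
    rw [hperm.mem_iff, Finset.mem_toList]
  have hsorted : List.Pairwise (fun a b : ℤ => |a| ≤ |b|) L := by
    have := List.pairwise_mergeSort (le := fun a b : ℤ => decide (|a| ≤ |b|))
      (fun a b c hab hbc => by simp only [decide_eq_true_eq] at *; omega)
      (fun a b => by simp [le_total]) S.toList
    simpa using this
  -- key bound
  have hkey : ∀ k : ℕ, ∀ hk : k < L.length, |L[k]| ≤ (k : ℤ) := by
    intro k hk
    by_contra hcon
    push_neg at hcon
    have hsub : S ∩ Finset.Icc (-(k:ℤ)) (k:ℤ) ⊆ (L.take k).toFinset := by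
      intro x hx
      simp only [Finset.mem_inter, Finset.mem_Icc] at hx
      have hxabs : |x| ≤ (k : ℤ) := abs_le.mpr hx.2
      have hxL : x ∈ L := (hmemL x).mpr hx.1
      obtain ⟨⟨m, hm⟩, hmx⟩ := List.mem_iff_get.mp hxL
      simp only [List.get_eq_getElem] at hmx
      have hmk : m < k := by
        by_contra hmk
        push_neg at hmk
        rcases eq_or_lt_of_le hmk with heq | hlt
        · subst heq; rw [hmx] at hcon; omega
        · have := List.pairwise_iff_get.mp hsorted ⟨k, hk⟩ ⟨m, hm⟩ hlt
          simp only [List.get_eq_getElem] at this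
          rw [hmx] at this; omega
      have htk : m < (L.take k).length := by
        simp [List.length_take]; omega
      rw [List.mem_toFinset]
      have : (L.take k)[m] = x := by rw [List.getElem_take]; exact hmx
      rw [← this]; exact List.getElem_mem htk
    have hle : (S ∩ Finset.Icc (-(k:ℤ)) (k:ℤ)).card ≤ k :=
      le_trans (Finset.card_le_card hsub)
        (le_trans (List.toFinset_card_le _) (by simp [List.length_take]))
    have hk' : k ≤ n - 1 := by omega
    have := hcat k hk'
    omega
  -- the triangle
  set A : ℤ → ℤ → ℤ := fun i j => if 1 ≤ i ∧ i ≤ (n:ℤ) ∧ L.getD (i-1).toNat 0 = j then 1 else 0 with hA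
  have hAif : ∀ i j, A i j = if 1 ≤ i ∧ i ≤ (n:ℤ) ∧ L.getD (i-1).toNat 0 = j then 1 else 0 :=
    fun i j => rfl
  have hAne : ∀ i j, A i j ≠ 0 → 1 ≤ i ∧ i ≤ (n:ℤ) ∧ L.getD (i-1).toNat 0 = j := by
    intro i j hij
    by_contra hc
    exact hij ((hAif i j).trans (if_neg hc))
  have hidx : ∀ i : ℤ, 1 ≤ i → i ≤ (n:ℤ) → (i-1).toNat < L.length := by
    intro i h1 h2; rw [hlen]; omega
  refine ⟨A, ⟨?_, ?_, ?_, ?_, ?_, ?_⟩, ?_⟩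
  · intro i j hij
    obtain ⟨h1, h2, h3⟩ := hAne i j hij
    have hk := hidx i h1 h2
    have habs := hkey _ hk
    rw [List.getD_eq_getElem _ _ hk] at h3
    rw [h3] at habs
    have hji : |j| ≤ i - 1 := by
      have : ((i-1).toNat : ℤ) = i - 1 := by omega
      omega
    rw [abs_le] at hji
    exact ⟨h1, h2, by omega, by omega⟩
  · intro i j
    rw [hAif]
    by_cases hc : 1 ≤ i ∧ i ≤ (n:ℤ) ∧ L.getD (i-1).toNat 0 = j
    · rw [if_pos hc]; tauto
    · rw [if_neg hc]; tauto
  · intro i h1 h2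
    have hk := hidx i h1 h2
    have habs := hkey _ hk
    set c := L[(i-1).toNat] with hc
    have hcm : c ∈ Finset.Icc (-i+1) (i-1) := by
      rw [Finset.mem_Icc]
      have : ((i-1).toNat : ℤ) = i - 1 := by omega
      rw [abs_le] at habs; omega
    have hrow : ∀ j, A i j = if c = j then 1 else 0 := by
      intro j
      rw [hAif, List.getD_eq_getElem _ _ hk, ← hc]
      by_cases hcj : c = j
      · rw [if_pos hcj, if_pos ⟨h1, h2, hcj⟩]
      · rw [if_neg hcj, if_neg (by tauto)]
    simp only [hrow]
    rw [Finset.sum_ite_eq, if_pos hcm]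
  · intro i j1 j2 hj hne1 hne2 _
    exfalso
    obtain ⟨_, _, e1⟩ := hAne i j1 hne1
    obtain ⟨_, _, e2⟩ := hAne i j2 hne2
    rw [e1] at e2; omega
  · intro j i1 i2 hi hne1 hne2 _
    exfalso
    obtain ⟨a1, b1, e1⟩ := hAne i1 j hne1
    obtain ⟨a2, b2, e2⟩ := hAne i2 j hne2
    have hk1 := hidx i1 a1 b1
    have hk2 := hidx i2 a2 b2
    rw [List.getD_eq_getElem _ _ hk1] at e1
    rw [List.getD_eq_getElem _ _ hk2] at e2
    have hfin : (⟨(i1-1).toNat, hk1⟩ : Fin L.length) = ⟨(i2-1).toNat, hk2⟩ := by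
      rw [← hnodup.get_inj_iff]
      simp only [List.get_eq_getElem]
      rw [e1, e2]
    have : (i1-1).toNat = (i2-1).toNat := congrArg Fin.val hfin
    omega
  · intro i j hij _
    obtain ⟨h1, h2, h3⟩ := hAne i j hij
    exact (hAif i j).trans (if_pos ⟨h1, h2, h3⟩)
  · ext j
    simp only [astCols, Finset.mem_filter, Finset.mem_Icc]
    constructor
    · rintro ⟨-, hpos⟩
      by_contra hjS
      have hz : ∀ i ∈ Finset.Icc (1:ℤ) (n:ℤ), A i j = 0 := by
        intro i hi
        by_contra hne
        obtain ⟨h1, h2, e⟩ := hAne i j hne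
        have hk := hidx i h1 h2
        rw [List.getD_eq_getElem _ _ hk] at e
        exact hjS ((hmemL j).mp (e ▸ List.getElem_mem hk))
      rw [Finset.sum_eq_zero hz] at hpos
      exact lt_irrefl _ hpos
    · intro hjS
      refine ⟨?_, ?_⟩
      · have := hrange j hjS; omega
      · have hjL : j ∈ L := (hmemL j).mpr hjS
        obtain ⟨⟨m, hm⟩, hmx⟩ := List.mem_iff_get.mp hjL
        simp only [List.get_eq_getElem] at hmx
        apply Finset.sum_pos'
        · intro i _
          rw [hAif]
          by_cases hc : 1 ≤ i ∧ i ≤ (n:ℤ) ∧ L.getD (i-1).toNat 0 = j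
          · rw [if_pos hc]; norm_num
          · rw [if_neg hc]
        · refine ⟨(m:ℤ)+1, ?_, ?_⟩
          · rw [Finset.mem_Icc]
            have : m < n := hlen ▸ hm
            omega
          · have h1 : (1:ℤ) ≤ (m:ℤ)+1 := by omega
            have h2 : (m:ℤ)+1 ≤ (n:ℤ) := by have : m < n := hlen ▸ hm; omega
            have ht : ((m:ℤ)+1-1).toNat = m := by omega
            have hA1 : A ((m:ℤ)+1) j = 1 := by
              rw [hAif]
              refine if_pos ⟨h1, h2, ?_⟩
              rw [ht, List.getD_eq_getElem _ _ hm]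
              exact hmx
            rw [hA1]; norm_num
end
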